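/- arXiv:2102.05860 — 8 statements merged into one kernel-verified Lean document; each statement's English description precedes it below -/
import Mathlib

section
/- The complex open unit disk 𝔻 = {z ∈ ℂ : |z| < 1} with Möbius addition a ⊕_M b = (a + b)/(1 + \bar{a}b) is a gyrogroup, with gyrations given by gyr[a,b](c) = ((1 + a\bar{b})/(1 + \bar{a}b))·c. -/
/-!
On the disk `|ā b| < 1`, so the denominators `1 + ā b` never vanish, and the identity
`|1 + ā b|² - |a + b|² = (1 - |a|²)(1 - |b|²)` shows that `a ⊕ b` stays in the disk.
The gyration `gyr[a,b]` is multiplication by the unimodular number `conj p / p`, `p = 1 + ā b`,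
and `⊕` commutes with such rotations. Both sides of the gyroassociative law reduce to
`(a + b + c + a b̄ c) / (1 + ā b + ā c + b̄ c)`, and the loop property holds because
`1 + (a ⊕ b) b̄` and `1 + conj (a ⊕ b) b` are `1 + |b|² + 2 Re (ā b)` divided by `p` and by
`conj p` respectively.
-/

/-- Möbius addition on the complex plane. -/
noncomputable def mAdd (a b : ℂ) : ℂ := (a + b) / (1 + (starRingEnd ℂ) a * b)

/-- The Möbius gyration `gyr[a,b]`. -/
noncomputable def mGyr (a b c : ℂ) : ℂ :=
  ((1 + a * (starRingEnd ℂ) b) / (1 + (starRingEnd ℂ) a * b)) * c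

open ComplexConjugate

section Algebra

variable {a b : ℂ}

@[simp]
lemma zero_mAdd (a : ℂ) : mAdd 0 a = a := by simp [mAdd]

@[simp]
lemma mAdd_zero (a : ℂ) : mAdd a 0 = a := by simp [mAdd]

@[simp]
lemma neg_mAdd_self (a : ℂ) : mAdd (-a) a = 0 := by simp [mAdd]

@[simp]
lemma mAdd_neg_self (a : ℂ) : mAdd a (-a) = 0 := by simp [mAdd]

lemma mAdd_mul_mul {w : ℂ} (hw : ‖w‖ = 1) (c d : ℂ) :
    mAdd (w * c) (w * d) = w * mAdd c d := by
  have hw' : conj w * w = 1 := by rw [Complex.conj_mul', hw]; norm_num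
  have hden : 1 + conj (w * c) * (w * d) = 1 + conj c * d := by
    rw [map_mul]
    linear_combination (conj c * d) * hw'
  rw [mAdd, mAdd, hden, ← mul_add, mul_div_assoc]

lemma norm_gyration_factor (hab : 1 + conj a * b ≠ 0) :
    ‖(1 + a * conj b) / (1 + conj a * b)‖ = 1 := by
  have hnum : 1 + a * conj b = conj (1 + conj a * b) := by simp
  rw [hnum, norm_div, Complex.norm_conj, div_self (norm_ne_zero_iff.2 hab)]

lemma mGyr_mAdd (hab : 1 + conj a * b ≠ 0) (c d : ℂ) :
    mGyr a b (mAdd c d) = mAdd (mGyr a b c) (mGyr a b d) :=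
  (mAdd_mul_mul (norm_gyration_factor hab) c d).symm

lemma mAdd_div (a x : ℂ) {y : ℂ} (hy : y ≠ 0) :
    mAdd a (x / y) = (a * y + x) / (y + conj a * x) := by
  rw [mAdd, ← mul_div_mul_right _ _ hy]
  congr 1 <;> field_simp

lemma mAdd_mAdd (a b c : ℂ) (hbc : 1 + conj b * c ≠ 0) :
    mAdd a (mAdd b c) =
      (a + b + c + a * conj b * c) / (1 + conj a * b + conj a * c + conj b * c) := by
  rw [mAdd.eq_1 b c, mAdd_div a _ hbc]
  congr 1 <;> ring

lemma mAdd_mAdd_mGyr (hab : 1 + conj a * b ≠ 0) (c : ℂ) :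
    mAdd (mAdd a b) (mGyr a b c) =
      (a + b + c + a * conj b * c) / (1 + conj a * b + conj a * c + conj b * c) := by
  have hab' : 1 + a * conj b ≠ 0 := by simpa using (map_ne_zero conj).2 hab
  rw [mAdd, mAdd, mGyr]
  simp only [map_div₀, map_add, map_mul, map_one, Complex.conj_conj]
  set p := 1 + conj a * b with hp
  set q := 1 + a * conj b with hq
  have hnum : (a + b) / p + q / p * c = (a + b + q * c) / p := by ring
  have hden : 1 + (conj a + conj b) / q * (q / p * c) = (p + (conj a + conj b) * c) / p := by
    field_simp
  rw [hnum, hden, div_div_div_cancel_right₀ hab, hp, hq]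
  congr 1 <;> ring

lemma mGyr_mAdd_left (hab : 1 + conj a * b ≠ 0) (h : 1 + conj (mAdd a b) * b ≠ 0) (c : ℂ) :
    mGyr (mAdd a b) b c = mGyr a b c := by
  have hab' : 1 + a * conj b ≠ 0 := by simpa using (map_ne_zero conj).2 hab
  rw [mGyr, mGyr]
  simp only [mAdd, map_div₀, map_add, map_mul, map_one, Complex.conj_conj] at h ⊢
  set p := 1 + conj a * b
  set q := 1 + a * conj b
  set M := 1 + conj a * b + a * conj b + b * conj b
  have hp : 1 + (a + b) / p * conj b = M / p := by field_simp; ring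
  have hq : 1 + (conj a + conj b) / q * b = M / q := by field_simp; ring
  rw [hq, div_ne_zero_iff] at h
  rw [hp, hq, div_div_div_cancel_left' _ _ h.1]

end Algebra

section UnitDisk

variable {a b : ℂ}

lemma one_add_conj_mul_ne_zero (ha : ‖a‖ < 1) (hb : ‖b‖ < 1) : 1 + conj a * b ≠ 0 := by
  have hlt : ‖conj a * b‖ < 1 := by
    rw [norm_mul, Complex.norm_conj]
    nlinarith [norm_nonneg a, norm_nonneg b]
  intro h
  rw [← neg_eq_of_add_eq_zero_right h, norm_neg, norm_one] at hlt
  exact lt_irrefl _ hlt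

lemma sq_norm_one_add_conj_mul_sub_sq_norm_add (a b : ℂ) :
    ‖1 + conj a * b‖ ^ 2 - ‖a + b‖ ^ 2 = (1 - ‖a‖ ^ 2) * (1 - ‖b‖ ^ 2) := by
  simp only [Complex.sq_norm, Complex.normSq_apply, Complex.add_re, Complex.add_im,
    Complex.mul_re, Complex.mul_im, Complex.conj_re, Complex.conj_im, Complex.one_re,
    Complex.one_im]
  ring

lemma norm_mAdd_lt_one (ha : ‖a‖ < 1) (hb : ‖b‖ < 1) : ‖mAdd a b‖ < 1 := by
  rw [mAdd, norm_div, div_lt_one (norm_pos_iff.2 (one_add_conj_mul_ne_zero ha hb))]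
  refine lt_of_pow_lt_pow_left₀ 2 (norm_nonneg _) ?_
  have hpos : 0 < (1 - ‖a‖ ^ 2) * (1 - ‖b‖ ^ 2) := by
    apply mul_pos <;> nlinarith [norm_nonneg a, norm_nonneg b]
  linarith [sq_norm_one_add_conj_mul_sub_sq_norm_add a b]

lemma bijOn_mul_unitDisk {w : ℂ} (hw : ‖w‖ = 1) :
    Set.BijOn (w * ·) {z : ℂ | ‖z‖ < 1} {z : ℂ | ‖z‖ < 1} :=
  (Equiv.mulLeft₀ w (norm_ne_zero_iff.1 (hw ▸ one_ne_zero))).bijOn fun z => by simp [hw]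

end UnitDisk

/-- The open unit disk `𝔻` with Möbius addition is a gyrogroup, with gyrations
`gyr[a,b] c = ((1 + a·conj b)/(1 + conj a·b))·c`. -/
theorem mobius_gyrogroup :
    -- ⊕_M is well defined on 𝔻
    (∀ a b : ℂ, ‖a‖ < 1 → ‖b‖ < 1 → ‖(mAdd a b)‖ < 1) ∧
    -- 0 is a (two-sided) identity
    (∀ a : ℂ, ‖a‖ < 1 → mAdd 0 a = a ∧ mAdd a 0 = a) ∧
    -- -a is a (two-sided) inverse of a
    (∀ a : ℂ, ‖a‖ < 1 → mAdd (-a) a = 0 ∧ mAdd a (-a) = 0) ∧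
    -- gyr[a,b] maps 𝔻 bijectively onto 𝔻
    (∀ a b : ℂ, ‖a‖ < 1 → ‖b‖ < 1 →
      Set.BijOn (mGyr a b) {z : ℂ | ‖z‖ < 1} {z : ℂ | ‖z‖ < 1}) ∧
    -- gyr[a,b] preserves the operation
    (∀ a b c d : ℂ, ‖a‖ < 1 → ‖b‖ < 1 → ‖c‖ < 1 →
      ‖d‖ < 1 → mGyr a b (mAdd c d) = mAdd (mGyr a b c) (mGyr a b d)) ∧
    -- left gyroassociative law
    (∀ a b c : ℂ, ‖a‖ < 1 → ‖b‖ < 1 → ‖c‖ < 1 →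
      mAdd a (mAdd b c) = mAdd (mAdd a b) (mGyr a b c)) ∧
    -- left loop property
    (∀ a b c : ℂ, ‖a‖ < 1 → ‖b‖ < 1 → ‖c‖ < 1 →
      mGyr (mAdd a b) b c = mGyr a b c) := by
  refine ⟨fun a b => norm_mAdd_lt_one, fun a _ => ⟨zero_mAdd a, mAdd_zero a⟩,
    fun a _ => ⟨neg_mAdd_self a, mAdd_neg_self a⟩, ?_, ?_, ?_, ?_⟩
  · intro a b ha hb
    exact bijOn_mul_unitDisk (norm_gyration_factor (one_add_conj_mul_ne_zero ha hb))
  · intro a b c d ha hb _ _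
    exact mGyr_mAdd (one_add_conj_mul_ne_zero ha hb) c d
  · intro a b c ha hb hc
    rw [mAdd_mAdd a b c (one_add_conj_mul_ne_zero hb hc),
      mAdd_mAdd_mGyr (one_add_conj_mul_ne_zero ha hb)]
  · intro a b c ha hb _
    exact mGyr_mAdd_left (one_add_conj_mul_ne_zero ha hb)
      (one_add_conj_mul_ne_zero (norm_mAdd_lt_one ha hb) hb) c
end

section
/- Let G be a topological gyrogroup and H an L-subgyrogroup of G. Then the natural map π : G → G/H, a ↦ a ⊕ H, is an open continuous surjection when G/H carries the quotient topology τ(G/H) = {O ⊆ G/H : π⁻¹(O) is open in G}. -/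
/-- A gyrogroup: groupoid with identity, inverses, gyroautomorphisms satisfying
the left gyroassociative law and the left loop property. -/
class Gyrogroup (G : Type*) where
  add : G → G → G
  zero : G
  neg : G → G
  gyr : G → G → G → G
  zero_add : ∀ a, add zero a = a
  add_zero : ∀ a, add a zero = a
  neg_add : ∀ a, add (neg a) a = zero
  add_neg : ∀ a, add a (neg a) = zero
  gyr_add : ∀ x y a b, gyr x y (add a b) = add (gyr x y a) (gyr x y b)
  gyr_bijective : ∀ x y, Function.Bijective (gyr x y)
  left_gyroassoc : ∀ x y z, add x (add y z) = add (add x y) (gyr x y z)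
  loop : ∀ x y, gyr (add x y) y = gyr x y

/-- `H` is a subgyrogroup of `G`: it contains the identity, is closed under the
operation and inverses (hence forms a gyrogroup under the inherited operation),
and the restriction of each `gyr[a,b]`, `a b ∈ H`, is an automorphism of `H`. -/
def IsSubgyrogroup {G : Type*} [Gyrogroup G] (H : Set G) : Prop :=
  Gyrogroup.zero ∈ H ∧
  (∀ a ∈ H, Gyrogroup.neg a ∈ H) ∧
  (∀ a ∈ H, ∀ b ∈ H, Gyrogroup.add a b ∈ H) ∧
  (∀ a ∈ H, ∀ b ∈ H, Gyrogroup.gyr a b '' H = H)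

/-- A topological gyrogroup: the operation is jointly continuous and inversion
is continuous. -/
class TopGyrogroup (G : Type*) [TopologicalSpace G] extends Gyrogroup G where
  continuous_add : Continuous fun p : G × G => add p.1 p.2
  continuous_neg : Continuous neg

/-- `H` is an L-subgyrogroup: a subgyrogroup with `gyr[a,h](H) = H` for all
`a ∈ G`, `h ∈ H`. -/
def IsLSubgyrogroup {G : Type*} [Gyrogroup G] (H : Set G) : Prop :=
  IsSubgyrogroup H ∧ ∀ a : G, ∀ h ∈ H, Gyrogroup.gyr a h '' H = H

/-- The setoid identifying points of `G` with the same left coset `a ⊕ H`. -/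
def cosetSetoid (G : Type*) [Gyrogroup G] (H : Set G) : Setoid G :=
  Setoid.ker (fun a => Gyrogroup.add a '' H)

/-- The coset space `G/H` of left cosets, with the quotient topology. -/
abbrev CosetSpace (G : Type*) [Gyrogroup G] (H : Set G) := Quotient (cosetSetoid G H)

namespace GyroAux

open Gyrogroup (add neg gyr)

variable {G : Type*} [Gyrogroup G]

lemma neg_add_add (a b : G) :
    add (neg a) (add a b) = gyr Gyrogroup.zero a b := by
  rw [Gyrogroup.left_gyroassoc, Gyrogroup.neg_add, Gyrogroup.zero_add,
    ← Gyrogroup.loop (neg a) a, Gyrogroup.neg_add]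

lemma gyr_zero_eq (a b : G) : gyr Gyrogroup.zero a b = b := by
  have h1 : add a b = add a (gyr Gyrogroup.zero a b) := by
    have := Gyrogroup.left_gyroassoc (Gyrogroup.zero : G) a b
    rwa [Gyrogroup.zero_add, Gyrogroup.zero_add] at this
  have h2 : add (neg a) (add a b) = add (neg a) (add a (gyr Gyrogroup.zero a b)) := by
    rw [← h1]
  rw [neg_add_add, neg_add_add] at h2
  exact ((Gyrogroup.gyr_bijective (Gyrogroup.zero : G) a).injective h2).symm

lemma left_cancel (a b : G) : add (neg a) (add a b) = b := by
  rw [neg_add_add, gyr_zero_eq]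

lemma neg_neg (a : G) : neg (neg a) = a := by
  have h : add (neg a) (neg (neg a)) = add (neg a) a := by
    rw [Gyrogroup.add_neg, Gyrogroup.neg_add]
  have := congrArg (fun x => add (neg (neg a)) x) h
  simp only [left_cancel] at this
  exact this

lemma left_cancel' (a b : G) : add a (add (neg a) b) = b := by
  have := left_cancel (neg a) b
  rwa [neg_neg] at this

end GyroAux

namespace GyroAux

lemma self_add_image {G : Type*} [Gyrogroup G] {H : Set G} (hH : IsSubgyrogroup H)
    {h : G} (hh : h ∈ H) : Gyrogroup.add h '' H = H := by
  obtain ⟨hz, hneg, hadd, _⟩ := hH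
  apply Set.Subset.antisymm
  · rintro _ ⟨k, hk, rfl⟩
    exact hadd h hh k hk
  · intro k hk
    exact ⟨Gyrogroup.add (Gyrogroup.neg h) k, hadd _ (hneg h hh) _ hk, left_cancel' h k⟩

lemma coset_eq_of_mem {G : Type*} [Gyrogroup G] {H : Set G} (hH : IsLSubgyrogroup H)
    {b h : G} (hh : h ∈ H) :
    Gyrogroup.add (Gyrogroup.add b h) '' H = Gyrogroup.add b '' H := by
  calc Gyrogroup.add (Gyrogroup.add b h) '' H
      = Gyrogroup.add (Gyrogroup.add b h) '' (Gyrogroup.gyr b h '' H) := by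
        rw [hH.2 b h hh]
    _ = (fun z => Gyrogroup.add b (Gyrogroup.add h z)) '' H := by
        rw [← Set.image_comp]
        apply Set.image_congr
        intro z _
        simp only [Function.comp_apply]
        rw [← Gyrogroup.left_gyroassoc]
    _ = Gyrogroup.add b '' (Gyrogroup.add h '' H) := by
        rw [← Set.image_comp]; rfl
    _ = Gyrogroup.add b '' H := by rw [self_add_image hH.1 hh]

end GyroAux


/-- The natural map `π : G → G/H`, `a ↦ a ⊕ H`, is a continuous open surjection
onto the coset space with the quotient topology. -/
theorem quotient_map_open_continuous {G : Type*} [TopologicalSpace G] [TopGyrogroup G]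
    (H : Set G) (hH : IsLSubgyrogroup H) :
    Continuous (Quotient.mk (cosetSetoid G H)) ∧
    IsOpenMap (Quotient.mk (cosetSetoid G H)) ∧
    Function.Surjective (Quotient.mk (cosetSetoid G H)) := by
  refine ⟨continuous_quot_mk, ?_, fun q => Quotient.inductionOn q fun a => ⟨a, rfl⟩⟩
  intro U hU
  rw [isOpen_coinduced]
  show IsOpen (Quotient.mk (cosetSetoid G H) ⁻¹' (Quotient.mk (cosetSetoid G H) '' U))
  have key : Quotient.mk (cosetSetoid G H) ⁻¹' (Quotient.mk (cosetSetoid G H) '' U)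
      = ⋃ h ∈ H, (fun b => Gyrogroup.add b h) ⁻¹' U := by
    ext b
    simp only [Set.mem_preimage, Set.mem_image, Set.mem_iUnion]
    constructor
    · rintro ⟨a, haU, hab⟩
      have hrel : Gyrogroup.add a '' H = Gyrogroup.add b '' H := Quotient.exact hab
      have : a ∈ Gyrogroup.add b '' H := by
        rw [← hrel]
        exact ⟨Gyrogroup.zero, hH.1.1, Gyrogroup.add_zero a⟩
      obtain ⟨h, hh, hEq⟩ := this
      exact ⟨h, hh, by rwa [hEq]⟩
    · rintro ⟨h, hh, hbU⟩
      refine ⟨Gyrogroup.add b h, hbU, Quotient.sound ?_⟩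
      exact GyroAux.coset_eq_of_mem hH hh
  rw [key]
  apply isOpen_biUnion
  intro h _
  exact hU.preimage (TopGyrogroup.continuous_add.comp
    (Continuous.prodMk continuous_id (continuous_const : Continuous fun _ : G => h)))
end

section
/- Let G be a topological gyrogroup and H a closed, separable L-subgyrogroup of G. If Y is a separable subset of the quotient space G/H, then π⁻¹(Y) is separable in G, where π : G → G/H is the natural quotient map. -/
section GyroBasics

open Gyrogroup

variable {G : Type*} [Gyrogroup G]

lemma gyro_add_left_injective (a : G) : Function.Injective (add a) := by
  intro u v huv
  have h1 : add (neg a) (add a u) = add (neg a) (add a v) := by rw [huv]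
  rw [Gyrogroup.left_gyroassoc, Gyrogroup.left_gyroassoc, Gyrogroup.neg_add, Gyrogroup.zero_add, Gyrogroup.zero_add] at h1
  exact (Gyrogroup.gyr_bijective (neg a) a).1 h1

lemma gyro_gyr_zero (a : G) : ∀ z : G, gyr (zero : G) a z = z := by
  intro z
  have h : add a z = add a (gyr (zero : G) a z) := by
    have := Gyrogroup.left_gyroassoc (zero : G) a z
    rwa [Gyrogroup.zero_add, Gyrogroup.zero_add] at this
  exact (gyro_add_left_injective a h).symm

lemma gyro_gyr_neg_self (a : G) : ∀ z : G, gyr (neg a) a z = z := by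
  intro z
  have h := Gyrogroup.loop (neg a) a
  rw [Gyrogroup.neg_add] at h
  rw [← h]; exact gyro_gyr_zero a z

lemma gyro_gyr_self_neg (a : G) : ∀ z : G, gyr a (neg a) z = z := by
  intro z
  have h := Gyrogroup.loop a (neg a)
  rw [Gyrogroup.add_neg] at h
  rw [← h]; exact gyro_gyr_zero (neg a) z

lemma gyro_left_cancel (a b : G) : add (neg a) (add a b) = b := by
  rw [Gyrogroup.left_gyroassoc, Gyrogroup.neg_add, Gyrogroup.zero_add, gyro_gyr_neg_self]

lemma gyro_left_cancel' (a b : G) : add a (add (neg a) b) = b := by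
  rw [Gyrogroup.left_gyroassoc, Gyrogroup.add_neg, Gyrogroup.zero_add, gyro_gyr_self_neg]

end GyroBasics

section Cosets

open Gyrogroup

variable {G : Type*} [Gyrogroup G] {H : Set G}

lemma mem_coset_self (hH : IsSubgyrogroup H) (a : G) : a ∈ add a '' H :=
  ⟨zero, hH.1, Gyrogroup.add_zero a⟩

lemma coset_of_mem (hH : IsSubgyrogroup H) {h : G} (hh : h ∈ H) : add h '' H = H := by
  apply Set.Subset.antisymm
  · rintro _ ⟨k, hk, rfl⟩
    exact hH.2.2.1 h hh k hk
  · intro k hk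
    exact ⟨add (neg h) k, hH.2.2.1 _ (hH.2.1 h hh) k hk, gyro_left_cancel' h k⟩

lemma coset_add_mem (hH : IsLSubgyrogroup H) (g : G) {h : G} (hh : h ∈ H) :
    add (add g h) '' H = add g '' H := by
  have hgyr : gyr g h '' H = H := hH.2 g h hh
  apply Set.Subset.antisymm
  · rintro _ ⟨k, hk, rfl⟩
    rw [← hgyr] at hk
    obtain ⟨z, hz, rfl⟩ := hk
    exact ⟨add h z, hH.1.2.2.1 h hh z hz, Gyrogroup.left_gyroassoc g h z⟩
  · rintro _ ⟨k, hk, rfl⟩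
    have hk' : add h (add (neg h) k) = k := gyro_left_cancel' h k
    have hz : add (neg h) k ∈ H := hH.1.2.2.1 _ (hH.1.2.1 h hh) k hk
    refine ⟨gyr g h (add (neg h) k), ?_, ?_⟩
    · rw [← hgyr]; exact ⟨_, hz, rfl⟩
    · rw [← Gyrogroup.left_gyroassoc, hk']

lemma cosetSetoid_rel_iff (hH : IsLSubgyrogroup H) (g u : G) :
    (cosetSetoid G H).r g u ↔ u ∈ add g '' H := by
  constructor
  · intro h
    have : add g '' H = add u '' H := h
    rw [this]; exact mem_coset_self hH.1 u
  · rintro ⟨h, hh, rfl⟩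
    show add g '' H = add (add g h) '' H
    rw [coset_add_mem hH g hh]

end Cosets

section Topo

open Gyrogroup TopologicalSpace

variable {G : Type*} [TopologicalSpace G] [TopGyrogroup G] {H : Set G}

lemma gyro_continuous_add_left (a : G) : Continuous fun x : G => add a x :=
  TopGyrogroup.continuous_add.comp (continuous_const.prodMk continuous_id)

lemma gyro_continuous_add_right (h : G) : Continuous fun x : G => add x h :=
  TopGyrogroup.continuous_add.comp (continuous_id.prodMk continuous_const)

lemma gyro_isOpen_image_mk (hH : IsLSubgyrogroup H) {U : Set G} (hU : IsOpen U) :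
    IsOpen (Quotient.mk (cosetSetoid G H) '' U) := by
  rw [isOpen_coinduced (f := Quotient.mk (cosetSetoid G H))]
  have key : Quotient.mk (cosetSetoid G H) ⁻¹' (Quotient.mk (cosetSetoid G H) '' U)
      = ⋃ h ∈ H, (fun g : G => add g h) ⁻¹' U := by
    ext g
    simp only [Set.mem_preimage, Set.mem_image, Set.mem_iUnion]
    constructor
    · rintro ⟨u, hu, hq⟩
      have hr : (cosetSetoid G H).r g u := (cosetSetoid G H).symm (Quotient.exact hq)
      obtain ⟨h, hh, rfl⟩ := (cosetSetoid_rel_iff hH g u).mp hr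
      exact ⟨h, hh, hu⟩
    · rintro ⟨h, hh, hu⟩
      refine ⟨add g h, hu, ?_⟩
      exact Quotient.sound ((cosetSetoid G H).symm
        ((cosetSetoid_rel_iff hH g (add g h)).mpr ⟨h, hh, rfl⟩))
  rw [key]
  exact isOpen_biUnion fun h _ => hU.preimage (gyro_continuous_add_right h)

end Topo

/-- If `H` is a closed separable L-subgyrogroup and `Y` is a separable subset of
`G/H`, then `π⁻¹(Y)` is separable in `G`. -/
theorem preimage_separable {G : Type*} [TopologicalSpace G] [TopGyrogroup G]
    (H : Set G) (hH : IsLSubgyrogroup H) (hcl : IsClosed H)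
    (hsep : TopologicalSpace.IsSeparable H)
    (Y : Set (CosetSpace G H)) (hY : TopologicalSpace.IsSeparable Y) :
    TopologicalSpace.IsSeparable (Quotient.mk (cosetSetoid G H) ⁻¹' Y) := by
  classical
  obtain ⟨D, Dcount, hYD⟩ := hY
  have : Countable ↥D := Dcount.to_subtype
  set π := Quotient.mk (cosetSetoid G H) with hπ
  set T : Set G := ⋃ d : D, Gyrogroup.add (Quotient.out (d : CosetSpace G H)) '' H with hT
  have hTsep : TopologicalSpace.IsSeparable T :=
    TopologicalSpace.IsSeparable.iUnion fun d =>
      hsep.image (gyro_continuous_add_left _)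
  have hDT : ∀ u : G, π u ∈ D → u ∈ T := by
    intro u hu
    have hq : π (Quotient.out (π u)) = π u := Quotient.out_eq (π u)
    have hr : (cosetSetoid G H).r (Quotient.out (π u)) u := Quotient.exact hq
    have hmem := (cosetSetoid_rel_iff hH (Quotient.out (π u)) u).mp hr
    exact Set.mem_iUnion.mpr ⟨⟨π u, hu⟩, hmem⟩
  obtain ⟨c, ccount, hTc⟩ := hTsep
  refine ⟨c, ccount, ?_⟩
  intro g hg
  rw [mem_closure_iff]
  intro U hUopen hgU
  have h1 : π g ∈ closure D := hYD hg
  rw [mem_closure_iff] at h1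
  obtain ⟨d, hdU, hdD⟩ := h1 (π '' U) (gyro_isOpen_image_mk hH hUopen)
    (Set.mem_image_of_mem π hgU)
  obtain ⟨u, huU, rfl⟩ := hdU
  have huc : u ∈ closure c := hTc (hDT u hdD)
  rw [mem_closure_iff] at huc
  exact huc U hUopen huU
end

section
/- Let H be an L-subgyrogroup of a topological gyrogroup G such that all compact subspaces of H and of the quotient space G/H are metrizable. Then all compact subspaces of G are metrizable. -/
/-!
The diagonal of a compact set `K ⊆ G` is a Gδ set in `K × K`, so `K` is metrizable by Šneĭder's
theorem. Pairs of points in the same coset form a closed Gδ set `A`, the preimage of the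
diagonal of the metrizable compact set `π(K)`. The map `(x, y) ↦ ⊖x ⊕ y` sends `A` onto a compact
subset of `H`, which is metrizable, so `{0}` is a relative Gδ set there; the diagonal of `K` is the
part of `A` mapped to `0`.
-/

open Set Filter Topology TopologicalSpace

namespace Gyrogroup

variable {G : Type*} [Gyrogroup G]

theorem gyr_injective (x y : G) : Function.Injective (gyr x y) :=
  (gyr_bijective x y).1

theorem neg_add_add_eq_gyr (a b : G) : add (neg a) (add a b) = gyr (neg a) a b := by
  rw [left_gyroassoc, Gyrogroup.neg_add, Gyrogroup.zero_add]

theorem gyr_zero_left (a b : G) : gyr zero a b = b := by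
  have h := congrArg (add (neg a)) (left_gyroassoc zero a b)
  rw [Gyrogroup.zero_add, Gyrogroup.zero_add, neg_add_add_eq_gyr, neg_add_add_eq_gyr] at h
  exact (gyr_injective _ _ h).symm

theorem gyr_neg_self (a b : G) : gyr (neg a) a b = b := by
  rw [← loop, Gyrogroup.neg_add, gyr_zero_left]

theorem neg_add_cancel_left (a b : G) : add (neg a) (add a b) = b := by
  rw [neg_add_add_eq_gyr, gyr_neg_self]

theorem add_right_injective (a : G) : Function.Injective (add a) := fun b c h => by
  simpa only [neg_add_cancel_left] using congrArg (add (neg a)) h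

theorem eq_of_neg_add_eq_zero {x y : G} (h : add (neg x) y = zero) : x = y :=
  (add_right_injective (neg x) (h.trans (Gyrogroup.neg_add x).symm)).symm

theorem neg_add_mem_of_mk_eq_mk {H : Set G} (h0 : zero ∈ H) {x y : G}
    (h : (Quotient.mk (cosetSetoid G H) x) = Quotient.mk _ y) : add (neg x) y ∈ H := by
  have hxy : add x '' H = add y '' H := Quotient.exact h
  obtain ⟨k, hk, rfl⟩ : y ∈ add x '' H := hxy ▸ ⟨zero, h0, add_zero y⟩
  rwa [neg_add_cancel_left]

end Gyrogroup

section GDelta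

variable {X Y : Type*} [TopologicalSpace X] [TopologicalSpace Y]

theorem Topology.IsInducing.isGδ_iff {e : X → Y} (he : IsInducing e) {s : Set X} :
    IsGδ s ↔ ∃ t, IsGδ t ∧ e ⁻¹' t = s := by
  refine ⟨fun hs => ?_, fun ⟨t, ht, hts⟩ => hts ▸ ht.preimage he.continuous⟩
  obtain ⟨U, hUo, rfl⟩ := hs.eq_iInter_nat
  choose V hVo hVU using fun n => he.isOpen_iff.mp (hUo n)
  exact ⟨⋂ n, V n, .iInter fun n => (hVo n).isGδ, by simp only [preimage_iInter, hVU]⟩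

theorem IsGδ.inter_preimage_of_isClosed {A : Set X} (hA : IsGδ A) {g : X → Y}
    (hg : Continuous g) [PerfectlyNormalSpace (g '' A)] {C : Set Y} (hC : IsClosed C) :
    IsGδ (A ∩ g ⁻¹' C) := by
  have hC' : IsGδ (((↑) : g '' A → Y) ⁻¹' C) := (hC.preimage continuous_subtype_val).isGδ
  obtain ⟨U, hU, hUC⟩ := IsInducing.subtypeVal.isGδ_iff.mp hC'
  have hAU : A ∩ g ⁻¹' C = A ∩ g ⁻¹' U := by
    ext x
    refine and_congr_right fun hx => ?_
    exact (congrArg (⟨g x, mem_image_of_mem g hx⟩ ∈ ·) hUC).symm.to_iff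
  rw [hAU]
  exact hA.inter (hU.preimage hg)

variable [CompactSpace X] [T2Space X]

theorem isCountablyGenerated_nhdsSet_of_isClosed_of_isGδ {s : Set X} (hc : IsClosed s)
    (hs : IsGδ s) : (𝓝ˢ s).IsCountablyGenerated := by
  obtain ⟨f, rfl, -⟩ := exists_continuous_one_zero_of_isCompact_of_isGδ hc.isCompact hs
    isClosed_empty (disjoint_empty _)
  rw [← f.continuous.isClosedMap.comap_nhds_eq f.continuous]
  infer_instance

theorem metrizableSpace_of_isGδ_diagonal (h : IsGδ (diagonal X)) : MetrizableSpace X := by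
  let : UniformSpace X := uniformSpaceOfCompactR1
  have : (uniformity X).IsCountablyGenerated :=
    isCountablyGenerated_nhdsSet_of_isClosed_of_isGδ isClosed_diagonal h
  exact UniformSpace.metrizableSpace

end GDelta

/-- If all compact subspaces of an L-subgyrogroup `H` and of `G/H` are
metrizable, then all compact subspaces of `G` are metrizable. -/
theorem compact_subsets_metrizable {G : Type*} [TopologicalSpace G] [T2Space G]
    [TopGyrogroup G] (H : Set G) (hH : IsLSubgyrogroup H)
    (hHcpt : ∀ K : Set G, K ⊆ H → IsCompact K → TopologicalSpace.MetrizableSpace K)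
    (hQcpt : ∀ K : Set (CosetSpace G H), IsCompact K →
      TopologicalSpace.MetrizableSpace K) :
    ∀ K : Set G, IsCompact K → TopologicalSpace.MetrizableSpace K := by
  intro K hK
  have : CompactSpace K := isCompact_iff_compactSpace.mp hK
  set π : G → CosetSpace G H := Quotient.mk _
  have hπ : Continuous π := continuous_quot_mk
  have : MetrizableSpace (π '' K) := hQcpt _ (hK.image hπ)
  let f : K → π '' K := (mapsTo_image π K).restrict
  have hf : Continuous f := hπ.restrict _
  let A : Set (K × K) := Prod.map f f ⁻¹' diagonal _
  have hAc : IsClosed A := isClosed_diagonal.preimage (hf.prodMap hf)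
  have hA : IsGδ A := isClosed_diagonal.isGδ.preimage (hf.prodMap hf)
  let D : K × K → G := fun p => Gyrogroup.add (Gyrogroup.neg p.1) p.2
  have hD : Continuous D := TopGyrogroup.continuous_add.comp
    ((TopGyrogroup.continuous_neg.comp (by fun_prop)).prodMk (by fun_prop))
  have hDA : D '' A ⊆ H := by
    rintro _ ⟨p, hp, rfl⟩
    exact Gyrogroup.neg_add_mem_of_mk_eq_mk hH.1.1 (congrArg Subtype.val hp)
  have : MetrizableSpace (D '' A) := hHcpt _ hDA (hAc.isCompact.image hD)
  have hdiag : diagonal K = A ∩ D ⁻¹' {Gyrogroup.zero} := by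
    ext ⟨x, y⟩
    refine ⟨?_, fun h => Subtype.ext (Gyrogroup.eq_of_neg_add_eq_zero h.2)⟩
    rintro (rfl : x = y)
    exact ⟨rfl, Gyrogroup.neg_add _⟩
  exact metrizableSpace_of_isGδ_diagonal <|
    hdiag ▸ hA.inter_preimage_of_isClosed hD isClosed_singleton
end

section
/- Every strongly topological gyrogroup G with point Gδ-property (i.e., {0} is a Gδ-set) has a KG-sequence: there is a sequence (𝒰_n) of open covers of G such that whenever p_n ∈ st(q_n, 𝒰_n) for each n, and p_n → p and q_n → q, then p = q. -/
/-- A strongly topological gyrogroup: there is a (symmetric) neighborhood base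
`basis` at `0` each of whose members is invariant under all gyrations. -/
class StrongTopGyrogroup (G : Type*) [TopologicalSpace G] extends TopGyrogroup G where
  basis : Set (Set G)
  basis_mem_nhds : ∀ U ∈ basis, U ∈ nhds zero
  basis_is_basis : ∀ V ∈ nhds zero, ∃ U ∈ basis, U ⊆ V
  basis_open : ∀ U ∈ basis, IsOpen U
  basis_symm : ∀ U ∈ basis, ∀ x ∈ U, neg x ∈ U
  basis_gyr : ∀ U ∈ basis, ∀ x y : G, gyr x y '' U = U

/-- `H` is an admissible subgyrogroup generated from the base: `H = ⋂ₙ Uₙ`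
for a sequence of open symmetric basic neighborhoods of `0` with
`U_{n+1} ⊕ (U_{n+1} ⊕ U_{n+1}) ⊆ U_n`. -/
def AdmissibleFromBasis (G : Type*) [TopologicalSpace G] [StrongTopGyrogroup G]
    (H : Set G) : Prop :=
  ∃ U : ℕ → Set G, (∀ n, U n ∈ StrongTopGyrogroup.basis (G := G)) ∧
    (∀ n, Set.image2 Gyrogroup.add (U (n+1))
        (Set.image2 Gyrogroup.add (U (n+1)) (U (n+1))) ⊆ U n) ∧
    H = ⋂ n, U n


namespace GyroKG

open Gyrogroup Set Filter

variable {G : Type*}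

section Alg
variable [Gyrogroup G]

theorem add_left_cancel {a x y : G} (h : add a x = add a y) : x = y := by
  have e : ∀ z : G, gyr (neg a) a z = add (neg a) (add a z) := by
    intro z
    rw [Gyrogroup.left_gyroassoc, Gyrogroup.neg_add, Gyrogroup.zero_add]
  have h1 : gyr (neg a) a x = gyr (neg a) a y := by
    rw [e, e, h]
  exact (Gyrogroup.gyr_bijective (neg a) a).1 h1

theorem gyr_zero (y z : G) : gyr (zero : G) y z = z := by
  have h := Gyrogroup.left_gyroassoc (zero : G) y z
  rw [Gyrogroup.zero_add, Gyrogroup.zero_add] at h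
  exact add_left_cancel h.symm

theorem gyr_neg_self (a z : G) : gyr (neg a) a z = z := by
  have h := Gyrogroup.loop (neg a) a
  rw [Gyrogroup.neg_add] at h
  rw [← h]
  exact gyr_zero a z

theorem gyr_self_neg (a z : G) : gyr a (neg a) z = z := by
  have h := Gyrogroup.loop a (neg a)
  rw [Gyrogroup.add_neg] at h
  rw [← h]
  exact gyr_zero (neg a) z

theorem neg_add_cancel_left (a b : G) : add (neg a) (add a b) = b := by
  rw [Gyrogroup.left_gyroassoc, Gyrogroup.neg_add, Gyrogroup.zero_add]
  exact gyr_neg_self a b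

theorem add_neg_cancel_left (a b : G) : add a (add (neg a) b) = b := by
  rw [Gyrogroup.left_gyroassoc, Gyrogroup.add_neg, Gyrogroup.zero_add]
  exact gyr_self_neg a b

theorem key_identity (a b c : G) :
    add (neg (add a b)) (add a c) = gyr a b (add (neg b) c) := by
  have h : add a c = add (add a b) (gyr a b (add (neg b) c)) := by
    rw [← Gyrogroup.left_gyroassoc, add_neg_cancel_left]
  rw [h, neg_add_cancel_left]

theorem translate_back (x u : G) : add (add x u) (gyr x u (neg u)) = x := by
  rw [← Gyrogroup.left_gyroassoc, Gyrogroup.add_neg, Gyrogroup.add_zero]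

end Alg

section Top
variable [TopologicalSpace G] [StrongTopGyrogroup G]

theorem image_add_eq_preimage (x : G) (U : Set G) :
    Gyrogroup.add x '' U = (fun y => Gyrogroup.add (Gyrogroup.neg x) y) ⁻¹' U := by
  ext y
  constructor
  · rintro ⟨u, hu, rfl⟩
    show add (neg x) (add x u) ∈ U
    rwa [neg_add_cancel_left]
  · intro hy
    exact ⟨_, hy, add_neg_cancel_left x y⟩

theorem continuous_add_left (x : G) : Continuous fun y : G => Gyrogroup.add x y :=
  TopGyrogroup.continuous_add.comp (continuous_const.prodMk continuous_id)

theorem isOpen_image_add (x : G) {U : Set G} (hU : IsOpen U) :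
    IsOpen (Gyrogroup.add x '' U) := by
  rw [image_add_eq_preimage]
  exact hU.preimage (continuous_add_left (neg x))

theorem exists_sq (V : Set G) (hV : V ∈ nhds (Gyrogroup.zero : G)) :
    ∃ W ∈ nhds (Gyrogroup.zero : G), Set.image2 Gyrogroup.add W W ⊆ V := by
  have ht := (TopGyrogroup.continuous_add (G := G)).tendsto
      ((Gyrogroup.zero : G), (Gyrogroup.zero : G))
  have hV' : V ∈ nhds (add (zero : G) (zero : G)) := by rwa [Gyrogroup.zero_add]
  have hpre : (fun p : G × G => add p.1 p.2) ⁻¹' V ∈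
      nhds (((zero : G), (zero : G))) := ht hV'
  rw [nhds_prod_eq] at hpre
  obtain ⟨W1, hW1, W2, hW2, hsub⟩ := Filter.mem_prod_iff.1 hpre
  refine ⟨W1 ∩ W2, Filter.inter_mem hW1 hW2, ?_⟩
  rintro z ⟨a, ha, b, hb, rfl⟩
  exact hsub (Set.mk_mem_prod ha.1 hb.2)

theorem exists_basis_cube (V : Set G) (hV : V ∈ nhds (Gyrogroup.zero : G)) :
    ∃ U ∈ StrongTopGyrogroup.basis (G := G),
      Set.image2 add U (Set.image2 add U U) ⊆ V := by
  obtain ⟨W, hW, hWV⟩ := exists_sq V hV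
  obtain ⟨W', hW', hW'W⟩ := exists_sq W hW
  obtain ⟨U, hU, hUsub⟩ := StrongTopGyrogroup.basis_is_basis (W ∩ W')
    (Filter.inter_mem hW hW')
  refine ⟨U, hU, ?_⟩
  rintro z ⟨a, ha, bc, ⟨b, hb, c, hc, rfl⟩, rfl⟩
  exact hWV (Set.mem_image2_of_mem (hUsub ha).1
    (hW'W (Set.mem_image2_of_mem (hUsub hb).2 (hUsub hc).2)))

theorem closure_subset_image2 (A : Set G) {U : Set G}
    (hUb : U ∈ StrongTopGyrogroup.basis (G := G)) :
    closure A ⊆ Set.image2 add A U := by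
  intro x hx
  have h0U : (zero : G) ∈ U :=
    mem_of_mem_nhds (StrongTopGyrogroup.basis_mem_nhds U hUb)
  have hopen : IsOpen (add x '' U) :=
    isOpen_image_add x (StrongTopGyrogroup.basis_open U hUb)
  have hxmem : x ∈ add x '' U := ⟨zero, h0U, Gyrogroup.add_zero x⟩
  obtain ⟨a, ⟨u, huU, hau⟩, haA⟩ :=
    (mem_closure_iff.1 hx _ hopen hxmem)
  have hx' : x = add a (gyr x u (neg u)) := by rw [← hau, translate_back]
  rw [hx']
  apply Set.mem_image2_of_mem haA
  have hnu : neg u ∈ U := StrongTopGyrogroup.basis_symm U hUb u huU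
  have := Set.mem_image_of_mem (gyr x u) hnu
  rwa [StrongTopGyrogroup.basis_gyr U hUb x u] at this

end Top

end GyroKG

/-- Every strongly topological gyrogroup in which `{0}` is a Gδ-set has a
KG-sequence. -/
theorem strong_gyrogroup_KG_sequence {G : Type*} [TopologicalSpace G]
    [StrongTopGyrogroup G] (hGδ : IsGδ ({Gyrogroup.zero} : Set G)) :
    ∃ 𝒰 : ℕ → Set (Set G),
      (∀ n, (∀ V ∈ 𝒰 n, IsOpen V) ∧ ⋃₀ 𝒰 n = Set.univ) ∧
      (∀ (p q : ℕ → G) (p' q' : G),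
        (∀ n, p n ∈ ⋃₀ {V ∈ 𝒰 n | q n ∈ V}) →
        Filter.Tendsto p Filter.atTop (nhds p') →
        Filter.Tendsto q Filter.atTop (nhds q') → p' = q') := by
  classical
  open Gyrogroup Set Filter in
  obtain ⟨f, hfopen, hf⟩ := hGδ.eq_iInter_nat
  have h0i : (Gyrogroup.zero : G) ∈ ⋂ n, f n := by
    rw [← hf]; exact rfl
  have hf0 : ∀ n, (Gyrogroup.zero : G) ∈ f n := fun n => Set.mem_iInter.1 h0i n
  have hfnhds : ∀ n, f n ∈ nhds (Gyrogroup.zero : G) :=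
    fun n => (hfopen n).mem_nhds (hf0 n)
  choose! T hTb hTsub using GyroKG.exists_basis_cube (G := G)
  set U : ℕ → Set G :=
    fun n => Nat.rec (T (f 0)) (fun n prev => T (f (n + 1) ∩ prev)) n with hUdef
  have hUb : ∀ n, U n ∈ StrongTopGyrogroup.basis (G := G) := by
    intro n
    induction n with
    | zero => exact hTb _ (hfnhds 0)
    | succ n ih =>
      exact hTb _ (Filter.inter_mem (hfnhds (n + 1))
        (StrongTopGyrogroup.basis_mem_nhds _ ih))
  have h0U : ∀ n, (Gyrogroup.zero : G) ∈ U n :=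
    fun n => mem_of_mem_nhds (StrongTopGyrogroup.basis_mem_nhds _ (hUb n))
  have hcube : ∀ n, Set.image2 Gyrogroup.add (U (n + 1))
      (Set.image2 Gyrogroup.add (U (n + 1)) (U (n + 1))) ⊆ f (n + 1) ∩ U n := by
    intro n
    exact hTsub _ (Filter.inter_mem (hfnhds (n + 1))
      (StrongTopGyrogroup.basis_mem_nhds _ (hUb n)))
  have hcubef : ∀ n, Set.image2 Gyrogroup.add (U n)
      (Set.image2 Gyrogroup.add (U n) (U n)) ⊆ f n := by
    intro n
    cases n with
    | zero => exact hTsub _ (hfnhds 0)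
    | succ n => exact (hcube n).trans Set.inter_subset_left
  have hUf : ∀ n, U n ⊆ f n := by
    intro n u hu
    have h := hcubef n (Set.mem_image2_of_mem hu
      (Set.mem_image2_of_mem (h0U n) (h0U n)))
    rwa [Gyrogroup.zero_add, Gyrogroup.add_zero] at h
  have hUdec : ∀ n, U (n + 1) ⊆ U n := by
    intro n u hu
    have h := hcube n (Set.mem_image2_of_mem hu
      (Set.mem_image2_of_mem (h0U (n + 1)) (h0U (n + 1))))
    rw [Gyrogroup.zero_add, Gyrogroup.add_zero] at h
    exact h.2
  have hUanti : ∀ m n, m ≤ n → U n ⊆ U m := by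
    intro m n hmn
    induction hmn with
    | refl => exact subset_rfl
    | step h ih => exact (hUdec _).trans ih
  -- closure of U (n+1) ⊕ U (n+1) is inside U n
  have hkeysub : ∀ n,
      closure (Set.image2 Gyrogroup.add (U (n + 1)) (U (n + 1))) ⊆ U n := by
    intro n z hz
    have h1 := GyroKG.closure_subset_image2
      (Set.image2 Gyrogroup.add (U (n + 1)) (U (n + 1))) (hUb (n + 1)) hz
    obtain ⟨w, hw, c, hc, rfl⟩ := Set.mem_image2.1 h1
    obtain ⟨a, ha, b, hb, rfl⟩ := Set.mem_image2.1 hw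
    rw [← StrongTopGyrogroup.basis_gyr (U (n + 1)) (hUb (n + 1)) a b] at hc
    obtain ⟨d, hd, rfl⟩ := hc
    rw [← Gyrogroup.left_gyroassoc]
    exact (hcube n (Set.mem_image2_of_mem ha (Set.mem_image2_of_mem hb hd))).2
  refine ⟨fun n => Set.range fun x : G => Gyrogroup.add x '' U n, ?_, ?_⟩
  · intro n
    constructor
    · rintro V ⟨x, rfl⟩
      exact GyroKG.isOpen_image_add x (StrongTopGyrogroup.basis_open _ (hUb n))
    · apply Set.eq_univ_of_forall
      intro x
      exact ⟨Gyrogroup.add x '' U n, ⟨x, rfl⟩,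
        ⟨Gyrogroup.zero, h0U n, Gyrogroup.add_zero x⟩⟩
  · intro p q p' q' hst hp hq
    have hd : ∀ n, Gyrogroup.add (Gyrogroup.neg (p n)) (q n) ∈
        Set.image2 Gyrogroup.add (U n) (U n) := by
      intro n
      obtain ⟨V, hV, hpV⟩ := Set.mem_sUnion.1 (hst n)
      obtain ⟨hV1, hqV⟩ := hV
      obtain ⟨x, rfl⟩ := hV1
      obtain ⟨u, hu, hpu⟩ := hpV
      obtain ⟨v, hv, hqv⟩ := hqV
      rw [← hpu, ← hqv, GyroKG.key_identity]
      have hnu : Gyrogroup.neg u ∈ U n :=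
        StrongTopGyrogroup.basis_symm _ (hUb n) u hu
      rw [Gyrogroup.gyr_add]
      have hgu : Gyrogroup.gyr x u (Gyrogroup.neg u) ∈ U n := by
        have := Set.mem_image_of_mem (Gyrogroup.gyr x u) hnu
        rwa [StrongTopGyrogroup.basis_gyr _ (hUb n) x u] at this
      have hgv : Gyrogroup.gyr x u v ∈ U n := by
        have := Set.mem_image_of_mem (Gyrogroup.gyr x u) hv
        rwa [StrongTopGyrogroup.basis_gyr _ (hUb n) x u] at this
      exact Set.mem_image2_of_mem hgu hgv
    have hdt : Filter.Tendsto (fun n => Gyrogroup.add (Gyrogroup.neg (p n)) (q n))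
        Filter.atTop (nhds (Gyrogroup.add (Gyrogroup.neg p') q')) := by
      have h1 : Filter.Tendsto (fun n => Gyrogroup.neg (p n)) Filter.atTop
          (nhds (Gyrogroup.neg p')) :=
        (TopGyrogroup.continuous_neg.tendsto p').comp hp
      exact ((TopGyrogroup.continuous_add (G := G)).tendsto
        (Gyrogroup.neg p', q')).comp (h1.prodMk_nhds hq)
    have hmemf : ∀ m, Gyrogroup.add (Gyrogroup.neg p') q' ∈ f m := by
      intro m
      have hev : ∀ᶠ n in Filter.atTop,
          Gyrogroup.add (Gyrogroup.neg (p n)) (q n) ∈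
            Set.image2 Gyrogroup.add (U (m + 1)) (U (m + 1)) :=
        Filter.eventually_atTop.2 ⟨m + 1, fun n hn =>
          Set.image2_subset (hUanti _ _ hn) (hUanti _ _ hn) (hd n)⟩
      exact hUf m (hkeysub m (mem_closure_of_tendsto hdt hev))
    have hd0 : Gyrogroup.add (Gyrogroup.neg p') q' = Gyrogroup.zero := by
      have h1 : Gyrogroup.add (Gyrogroup.neg p') q' ∈ ⋂ n, f n :=
        Set.mem_iInter.2 hmemf
      rw [← hf] at h1
      exact h1
    have h2 : Gyrogroup.add (Gyrogroup.neg p') q' =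
        Gyrogroup.add (Gyrogroup.neg p') p' := by
      rw [hd0, Gyrogroup.neg_add]
    exact (GyroKG.add_left_cancel h2).symm
end

section
/- Let X be a regular space and f : X → Y a closed continuous map. Suppose b ∈ X is a Gδ-point in the fiber F = f⁻¹(f(b)) and F is Fréchet-Urysohn at b. If Y is strongly Fréchet-Urysohn, then X is Fréchet-Urysohn at b. -/
/-- `X` is Fréchet–Urysohn at `x`. -/
def FrechetUrysohnAt (X : Type*) [TopologicalSpace X] (x : X) : Prop :=
  ∀ A : Set X, x ∈ closure A →
    ∃ u : ℕ → X, (∀ n, u n ∈ A) ∧ Filter.Tendsto u Filter.atTop (nhds x)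

/-- `X` is strongly Fréchet–Urysohn. -/
def StronglyFrechetUrysohn (X : Type*) [TopologicalSpace X] : Prop :=
  ∀ (A : ℕ → Set X) (x : X), (∀ n, A (n+1) ⊆ A n) → (∀ n, x ∈ closure (A n)) →
    ∃ u : ℕ → X, (∀ n, u n ∈ A n) ∧ Filter.Tendsto u Filter.atTop (nhds x)

/-- `X` is strictly Fréchet–Urysohn. -/
def StrictlyFrechetUrysohn (X : Type*) [TopologicalSpace X] : Prop :=
  ∀ (A : ℕ → Set X) (x : X), (∀ n, x ∈ closure (A n)) →
    ∃ u : ℕ → X, (∀ n, u n ∈ A n) ∧ Filter.Tendsto u Filter.atTop (nhds x)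

/-!
Sequences are produced in `Y` and lifted along the closed map `f`. Write `F` for the fiber of
`f b`, choose closed neighbourhoods `V₀ ⊇ V₁ ⊇ ⋯` of `b` (regularity) whose intersection meets `F`
only in `b` (the Gδ hypothesis), and let `A'` be the set of points of `F` inseparable from a point
of `A`. If `b ∈ cl A'`, the Fréchet–Urysohn property of `F` gives the sequence. Otherwise the sets
`Bₙ = (A \ cl A') ∩ Vₙ` decrease and accumulate at `b`, so strong Fréchet–Urysohnness of `Y`
gives `xₙ ∈ Bₙ` with `f xₙ → f b`. If `xₙ` did not converge to `b`, closedness of `f` would give a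
point `c ∈ F` in the closure of a subsequence avoiding a neighbourhood of `b`. Such a `c` is either
in every `Vₙ`, hence equal to `b`, or in the closure of finitely many `xⱼ`. In a regular space
this makes `c` inseparable from some `xⱼ`, so `c ∈ A'`, which is impossible because `xⱼ ∉ cl A'`.
-/

open Filter Set Topology

section

variable {X Y : Type*} [TopologicalSpace X] [TopologicalSpace Y]

theorem Filter.Tendsto.congr_inseparable {ι : Type*} {l : Filter ι} {u v : ι → X} {x : X}
    (hu : Tendsto u l (𝓝 x)) (huv : ∀ i, Inseparable (u i) (v i)) : Tendsto v l (𝓝 x) := by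
  rw [SeparationQuotient.isInducing_mk.tendsto_nhds_iff] at hu ⊢
  have : SeparationQuotient.mk ∘ v = SeparationQuotient.mk ∘ u :=
    funext fun i => (SeparationQuotient.mk_eq_mk.2 (huv i)).symm
  rwa [this]

theorem mem_closure_inter_of_mem_nhds {s t : Set X} {x : X} (hs : x ∈ closure s) (ht : t ∈ 𝓝 x) :
    x ∈ closure (s ∩ t) := by
  rw [mem_closure_iff_nhdsWithin_neBot] at hs ⊢
  rwa [← nhdsWithin_restrict' s ht]

theorem FrechetUrysohnAt.exists_tendsto_of_subset {s : Set X} {x : X} {hx : x ∈ s}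
    (h : FrechetUrysohnAt s ⟨x, hx⟩) {t : Set X} (hts : t ⊆ s) (hxt : x ∈ closure t) :
    ∃ u : ℕ → X, (∀ n, u n ∈ t) ∧ Tendsto u atTop (𝓝 x) := by
  have hx' : (⟨x, hx⟩ : s) ∈ closure (Subtype.val ⁻¹' t) := by
    rwa [closure_subtype, Subtype.image_preimage_coe, inter_eq_right.2 hts]
  obtain ⟨u, hut, hu⟩ := h _ hx'
  exact ⟨fun n => u n, hut, continuous_subtype_val.continuousAt.tendsto.comp hu⟩

theorem IsGδ.exists_seq_nhds_of_singleton_subtype {s : Set X} {x : s} (h : IsGδ ({x} : Set s)) :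
    ∃ O : ℕ → Set X, (∀ n, O n ∈ 𝓝 (x : X)) ∧ ∀ y ∈ s, (∀ n, y ∈ O n) → y = x := by
  obtain ⟨G, hG, hxG⟩ := h.eq_iInter_nat
  choose O hO hOG using fun n => isOpen_induced_iff.1 (hG n)
  have hmem : ∀ y : s, y ∈ ⋂ n, G n ↔ ∀ n, (y : X) ∈ O n := fun y => by
    simp only [mem_iInter, ← hOG, mem_preimage]
  refine ⟨O, fun n => (hO n).mem_nhds ((hmem x).1 (hxG ▸ rfl) n), fun y hy hyO => ?_⟩
  have hyG : (⟨y, hy⟩ : s) ∈ ⋂ n, G n := (hmem _).2 hyO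
  rw [← hxG] at hyG
  exact congrArg Subtype.val hyG

theorem exists_antitone_isClosed_nhds_subset [RegularSpace X] {x : X} {O : ℕ → Set X}
    (hO : ∀ n, O n ∈ 𝓝 x) :
    ∃ V : ℕ → Set X, Antitone V ∧ (∀ n, V n ∈ 𝓝 x) ∧ (∀ n, IsClosed (V n)) ∧ ∀ n, V n ⊆ O n := by
  choose C hC hCO using fun n => (closed_nhds_basis x).mem_iff.1 (hO n)
  exact ⟨fun n => ⋂ k ∈ Iic n, C k,
    fun m n hmn => biInter_subset_biInter_left (Iic_subset_Iic.2 hmn),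
    fun n => (biInter_mem (finite_Iic n)).2 fun k _ => (hC k).1,
    fun n => isClosed_biInter fun k _ => (hC k).2,
    fun n => (biInter_subset_of_mem (mem_Iic.2 le_rfl)).trans (hCO n)⟩

theorem IsClosedMap.exists_mem_closure_image_of_tendsto {ι : Type*} {f : X → Y}
    (hf : IsClosedMap f) {l : Filter ι} [l.NeBot] {x : ι → X} {y : Y}
    (hfx : Tendsto (f ∘ x) l (𝓝 y)) {s : Set ι} (hs : s ∈ l) :
    ∃ c ∈ closure (x '' s), f c = y :=
  hf.closure_image_subset _ <|
    mem_closure_of_tendsto hfx (mem_of_superset hs fun i hi => ⟨x i, mem_image_of_mem x hi, rfl⟩)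

theorem forall_mem_or_exists_specializes_of_mem_closure_range {V : ℕ → Set X} (hV : Antitone V)
    (hVc : ∀ n, IsClosed (V n)) {x : ℕ → X} (hxV : ∀ n, x n ∈ V n) {c : X}
    (hc : c ∈ closure (range x)) : (∀ n, c ∈ V n) ∨ ∃ j, x j ⤳ c := by
  refine or_iff_not_imp_left.2 fun hcV => ?_
  obtain ⟨m, hm⟩ := not_forall.1 hcV
  have hsub : range x ⊆ (⋃ j ∈ Iio m, {x j}) ∪ V m := by
    rintro _ ⟨n, rfl⟩
    rcases lt_or_ge n m with hn | hn
    · exact Or.inl (mem_biUnion hn rfl)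
    · exact Or.inr (hV hn (hxV n))
  have hc' := closure_mono hsub hc
  rw [closure_union, (finite_Iio m).closure_biUnion, (hVc m).closure_eq] at hc'
  obtain ⟨j, -, hj⟩ := mem_iUnion₂.1 (hc'.resolve_right hm)
  exact ⟨j, specializes_iff_mem_closure.2 hj⟩

theorem IsClosedMap.tendsto_nhds_of_tendsto_comp {f : X → Y} (hf : IsClosedMap f)
    {x : ℕ → X} {b : X} (hfx : Tendsto (f ∘ x) atTop (𝓝 (f b))) {V : ℕ → Set X}
    (hV : Antitone V) (hVc : ∀ n, IsClosed (V n)) (hxV : ∀ n, x n ∈ V n)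
    (hfib : ∀ c, f c = f b → (∀ n, c ∈ V n) → c = b)
    (hspec : ∀ j c, f c = f b → ¬x j ⤳ c) : Tendsto x atTop (𝓝 b) := by
  intro U hU
  by_contra hxU
  have : (atTop ⊓ 𝓟 {n | x n ∉ U}).NeBot := frequently_iff_neBot.1 (not_eventually.1 hxU)
  obtain ⟨c, hcN, hfc⟩ := hf.exists_mem_closure_image_of_tendsto (hfx.mono_left inf_le_left)
    (mem_inf_of_right (mem_principal_self {n | x n ∉ U}))
  rcases forall_mem_or_exists_specializes_of_mem_closure_range hV hVc hxV
    (closure_mono (image_subset_range x _) hcN) with hcV | ⟨j, hj⟩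
  · obtain rfl := hfib c hfc hcV
    obtain ⟨_, hU', n, hn, rfl⟩ := mem_closure_iff_nhds.1 hcN U hU
    exact hn hU'
  · exact hspec j c hfc hj

end

/-- If `f : X → Y` is a closed continuous map from a regular space, `b` is a
Gδ-point of its fiber, the fiber is Fréchet–Urysohn at `b`, and `Y` is strongly
Fréchet–Urysohn, then `X` is Fréchet–Urysohn at `b`. -/
theorem frechetUrysohnAt_of_closed_map {X Y : Type*} [TopologicalSpace X]
    [TopologicalSpace Y] [RegularSpace X] (f : X → Y) (hc : Continuous f)
    (hcl : IsClosedMap f) (b : X)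
    (hGδ : IsGδ ({(⟨b, rfl⟩ : f ⁻¹' {f b})} : Set (f ⁻¹' {f b})))
    (hFU : FrechetUrysohnAt (f ⁻¹' {f b}) ⟨b, rfl⟩)
    (hY : StronglyFrechetUrysohn Y) :
    FrechetUrysohnAt X b := by
  intro A hA
  obtain ⟨O, hO, hOb⟩ := hGδ.exists_seq_nhds_of_singleton_subtype
  obtain ⟨V, hVanti, hV, hVc, hVO⟩ := exists_antitone_isClosed_nhds_subset hO
  set A' : Set X := {c | f c = f b ∧ ∃ a ∈ A, Inseparable a c}
  by_cases hbA' : b ∈ closure A'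
  · obtain ⟨u, huA', hu⟩ := hFU.exists_tendsto_of_subset (fun c hc => hc.1) hbA'
    choose a ha hau using fun n => (huA' n).2
    exact ⟨a, ha, hu.congr_inseparable fun n => (hau n).symm⟩
  set B : ℕ → Set X := fun n => A ∩ (closure A')ᶜ ∩ V n
  have hbB : ∀ n, b ∈ closure (B n) := fun n => mem_closure_inter_of_mem_nhds
    (mem_closure_inter_of_mem_nhds hA (isClosed_closure.isOpen_compl.mem_nhds hbA')) (hV n)
  obtain ⟨y, hyB, hy⟩ := hY (fun n => f '' B n) (f b)
    (fun n => image_mono (inter_subset_inter_right _ (hVanti n.le_succ)))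
    (fun n => mem_closure_image hc.continuousAt (hbB n))
  choose x hxB hxy using hyB
  obtain rfl : f ∘ x = y := funext hxy
  refine ⟨x, fun n => (hxB n).1.1, hcl.tendsto_nhds_of_tendsto_comp hy hVanti hVc
    (fun n => (hxB n).2) (fun c hc hcV => hOb c hc fun n => hVO n (hcV n)) ?_⟩
  intro j c hc hjc
  have hins : Inseparable (x j) c := specializes_iff_inseparable.1 hjc
  exact (hxB j).1.2 ((hins.mem_closed_iff isClosed_closure).2
    (subset_closure ⟨hc, x j, (hxB j).1.1, hins⟩))
end

section
/- Let G be a strongly topological gyrogroup with symmetric neighborhood base 𝒰 at 0, and let H be a locally compact metrizable admissible subgyrogroup generated from 𝒰. If the quotient space G/H is sequential, then G is sequential. -/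
namespace SeqGyro

open Filter Set Topology

section Alg
variable {G : Type*} [Gyrogroup G]

local infixl:65 " ⊹ " => Gyrogroup.add
local prefix:100 "∸" => Gyrogroup.neg
local notation "𝟘" => Gyrogroup.zero
local notation "γ" => Gyrogroup.gyr

theorem left_cancel (a : G) {x y : G} (h : a ⊹ x = a ⊹ y) : x = y := by
  have h1 : ∀ z : G, ∸a ⊹ (a ⊹ z) = γ (∸a) a z := fun z => by
    rw [Gyrogroup.left_gyroassoc, Gyrogroup.neg_add, Gyrogroup.zero_add]
  have h2 := congrArg (fun t => ∸a ⊹ t) h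
  simp only [h1] at h2
  exact (Gyrogroup.gyr_bijective (∸a) a).1 h2

theorem gyr_zero_left (a z : G) : γ 𝟘 a z = z := by
  have := Gyrogroup.left_gyroassoc (𝟘 : G) a z
  rw [Gyrogroup.zero_add, Gyrogroup.zero_add] at this
  exact (left_cancel a this).symm

theorem gyr_neg_self (a z : G) : γ (∸a) a z = z := by
  have := Gyrogroup.loop (∸a : G) a
  rw [Gyrogroup.neg_add] at this
  rw [← this]
  exact gyr_zero_left a z

theorem neg_add_cancel_left (a x : G) : ∸a ⊹ (a ⊹ x) = x := by
  rw [Gyrogroup.left_gyroassoc, Gyrogroup.neg_add, Gyrogroup.zero_add, gyr_neg_self]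

theorem neg_neg (a : G) : ∸(∸a) = a :=
  left_cancel (∸a) (by rw [Gyrogroup.add_neg, Gyrogroup.neg_add])

theorem add_neg_cancel_left (a x : G) : a ⊹ (∸a ⊹ x) = x := by
  have := neg_add_cancel_left (∸a) x
  rwa [neg_neg] at this

theorem eq_neg_of_add_eq_zero {p q : G} (h : p ⊹ q = 𝟘) : q = ∸p := by
  have : ∸p ⊹ (p ⊹ q) = ∸p ⊹ 𝟘 := by rw [h]
  rwa [neg_add_cancel_left, Gyrogroup.add_zero] at this

theorem neg_eq_of_add_eq_zero {p q : G} (h : p ⊹ q = 𝟘) : p = ∸q := by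
  rw [eq_neg_of_add_eq_zero h, neg_neg]

theorem neg_zero : ∸(𝟘 : G) = 𝟘 := by
  have h := Gyrogroup.neg_add (𝟘 : G)
  rwa [Gyrogroup.add_zero] at h

theorem gyr_eq (a b z : G) : γ a b z = ∸(a ⊹ b) ⊹ (a ⊹ (b ⊹ z)) := by
  rw [Gyrogroup.left_gyroassoc a b z, neg_add_cancel_left]

theorem gyr_zero (x y : G) : γ x y 𝟘 = 𝟘 := by
  have h : γ x y (𝟘 ⊹ 𝟘) = γ x y 𝟘 ⊹ γ x y 𝟘 := Gyrogroup.gyr_add x y 𝟘 𝟘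
  rw [Gyrogroup.zero_add] at h
  have h2 : γ x y 𝟘 ⊹ γ x y (𝟘:G) = γ x y 𝟘 ⊹ 𝟘 := by
    rw [← h, Gyrogroup.add_zero]
  exact left_cancel _ h2

theorem gyr_neg (x y z : G) : γ x y (∸z) = ∸(γ x y z) := by
  have : γ x y (∸z) ⊹ γ x y z = 𝟘 := by
    rw [← Gyrogroup.gyr_add, Gyrogroup.neg_add, gyr_zero]
  exact neg_eq_of_add_eq_zero this

theorem neg_add_rev (a b : G) : ∸(a ⊹ b) = γ a b (∸b ⊹ ∸a) := by
  have : (a ⊹ b) ⊹ γ a b (∸b ⊹ ∸a) = 𝟘 := by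
    rw [← Gyrogroup.left_gyroassoc, add_neg_cancel_left, Gyrogroup.add_neg]
  have h2 := neg_eq_of_add_eq_zero this
  rw [h2, neg_neg]

theorem neg_add_of_add (a b c : G) : ∸(a ⊹ b) ⊹ (a ⊹ c) = γ a b (∸b ⊹ c) := by
  conv_lhs => rw [show a ⊹ c = a ⊹ (b ⊹ (∸b ⊹ c)) by rw [add_neg_cancel_left]]
  rw [Gyrogroup.left_gyroassoc a b (∸b ⊹ c), neg_add_cancel_left]

end Alg

section Top
variable {G : Type*} [TopologicalSpace G] [TopGyrogroup G]

local infixl:65 " ⊹ " => Gyrogroup.add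
local prefix:100 "∸" => Gyrogroup.neg
local notation "𝟘" => Gyrogroup.zero
local notation "γ" => Gyrogroup.gyr

theorem cont_add {X : Type*} [TopologicalSpace X] {f g : X → G} (hf : Continuous f)
    (hg : Continuous g) : Continuous fun x => f x ⊹ g x :=
  TopGyrogroup.continuous_add.comp (hf.prodMk hg)

theorem cont_neg {X : Type*} [TopologicalSpace X] {f : X → G} (hf : Continuous f) :
    Continuous fun x => ∸(f x) :=
  TopGyrogroup.continuous_neg.comp hf

theorem cont_add_left (a : G) : Continuous fun x : G => a ⊹ x :=
  cont_add continuous_const continuous_id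

theorem cont_add_right (a : G) : Continuous fun x : G => x ⊹ a :=
  cont_add continuous_id continuous_const

theorem cont_gyr (a b : G) : Continuous fun z : G => γ a b z := by
  have : (fun z : G => γ a b z) = fun z => ∸(a ⊹ b) ⊹ (a ⊹ (b ⊹ z)) := by
    funext z; exact gyr_eq a b z
  rw [this]
  exact cont_add continuous_const (cont_add continuous_const (cont_add continuous_const
    continuous_id))

theorem tendsto_zero_add {X : Type*} [TopologicalSpace X] {f g : X → G} {l : Filter X}
    (hf : Tendsto f l (nhds 𝟘)) (hg : Tendsto g l (nhds 𝟘)) :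
    Tendsto (fun x => f x ⊹ g x) l (nhds 𝟘) := by
  have h0 : (𝟘 : G) ⊹ 𝟘 = 𝟘 := Gyrogroup.zero_add 𝟘
  have := (TopGyrogroup.continuous_add (G := G)).continuousAt (x := ((𝟘 : G), (𝟘 : G)))
  rw [ContinuousAt, h0] at this
  exact this.comp (hf.prodMk_nhds hg)

end Top
section Basis
variable {G : Type*} [TopologicalSpace G] [StrongTopGyrogroup G]

local infixl:65 " ⊹ " => Gyrogroup.add
local prefix:100 "∸" => Gyrogroup.neg
local notation "𝟘" => Gyrogroup.zero
local notation "γ" => Gyrogroup.gyr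

/-- The distinguished basis. -/
abbrev bas (G : Type*) [TopologicalSpace G] [StrongTopGyrogroup G] : Set (Set G) :=
  StrongTopGyrogroup.basis

theorem basis_nhds {U : Set G} (hU : U ∈ bas G) : U ∈ 𝓝 (𝟘 : G) :=
  StrongTopGyrogroup.basis_mem_nhds U hU

theorem zero_mem_basis {U : Set G} (hU : U ∈ bas G) : (𝟘 : G) ∈ U :=
  mem_of_mem_nhds (basis_nhds hU)

theorem neg_mem_basis {U : Set G} (hU : U ∈ bas G) {x : G} (hx : x ∈ U) : ∸x ∈ U :=
  StrongTopGyrogroup.basis_symm U hU x hx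

theorem gyr_mem_basis {U : Set G} (hU : U ∈ bas G) (a b : G) {x : G} (hx : x ∈ U) :
    γ a b x ∈ U := by
  have := StrongTopGyrogroup.basis_gyr U hU a b
  rw [← this]
  exact Set.mem_image_of_mem _ hx

theorem gyr_surj_basis {U : Set G} (hU : U ∈ bas G) (a b : G) {w : G} (hw : w ∈ U) :
    ∃ w' ∈ U, γ a b w' = w := by
  have := StrongTopGyrogroup.basis_gyr U hU a b
  rw [← this] at hw
  exact hw

theorem isOpen_basis {U : Set G} (hU : U ∈ bas G) : IsOpen U :=
  StrongTopGyrogroup.basis_open U hU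

theorem shrink {S : Set G} (hS : S ∈ 𝓝 (𝟘 : G)) : ∃ V ∈ bas G, V ⊆ S :=
  StrongTopGyrogroup.basis_is_basis S hS

theorem mem_closure_decomp {S V : Set G} (hV : V ∈ bas G) {x : G} (hx : x ∈ closure S) :
    ∃ s ∈ S, ∃ v ∈ V, x = s ⊹ v := by
  have hc : ContinuousAt (fun y : G => ∸x ⊹ y) x := (cont_add_left (∸x)).continuousAt
  have h0 : ∸x ⊹ x = (𝟘 : G) := Gyrogroup.neg_add x
  have hN : (fun y : G => ∸x ⊹ y) ⁻¹' V ∈ 𝓝 x :=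
    hc (show V ∈ 𝓝 (∸x ⊹ x) by rw [h0]; exact basis_nhds hV)
  obtain ⟨s, hsN, hsS⟩ := mem_closure_iff_nhds.mp hx _ hN
  set v := ∸x ⊹ s with hv
  have hvV : v ∈ V := hsN
  refine ⟨s, hsS, γ x v (∸v), gyr_mem_basis hV x v (neg_mem_basis hV hvV), ?_⟩
  have hs : s = x ⊹ v := (add_neg_cancel_left x s).symm
  rw [hs, ← Gyrogroup.left_gyroassoc, Gyrogroup.add_neg, Gyrogroup.add_zero]

theorem closure_subset_basis {S V : Set G} (hV : V ∈ bas G) :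
    closure S ⊆ {y | ∃ s ∈ S, ∃ v ∈ V, y = s ⊹ v} := fun _x hx => mem_closure_decomp hV hx

theorem shrink2 {S : Set G} (hS : S ∈ 𝓝 (𝟘 : G)) :
    ∃ V ∈ bas G, ∀ x ∈ V, ∀ y ∈ V, x ⊹ y ∈ S := by
  have h : Tendsto (fun p : G × G => p.1 ⊹ p.2) (𝓝 ((𝟘 : G), (𝟘 : G))) (𝓝 (𝟘 : G)) := by
    have hc := (TopGyrogroup.continuous_add (G := G)).continuousAt
      (x := ((𝟘 : G), (𝟘 : G)))
    rwa [ContinuousAt, Gyrogroup.zero_add] at hc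
  have hT : (fun p : G × G => p.1 ⊹ p.2) ⁻¹' S ∈ 𝓝 ((𝟘 : G), (𝟘 : G)) := h hS
  rw [nhds_prod_eq, Filter.mem_prod_iff] at hT
  obtain ⟨A, hA, B, hB, hAB⟩ := hT
  obtain ⟨V, hVb, hV⟩ := shrink (Filter.inter_mem hA hB)
  exact ⟨V, hVb, fun x hx y hy => hAB (Set.mk_mem_prod (hV hx).1 (hV hy).2)⟩

theorem shrink5 {S : Set G} (hS : S ∈ 𝓝 (𝟘 : G)) :
    ∃ V ∈ bas G, ∀ u₁ ∈ V, ∀ u₂ ∈ V, ∀ p ∈ V, ∀ u₃ ∈ V, ∀ u₄ ∈ V,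
      ∸(u₁ ⊹ u₂) ⊹ (p ⊹ (u₃ ⊹ u₄)) ∈ S := by
  classical
  have c1 : Continuous fun q : G × G × G × G × G => q.1 := continuous_fst
  have c2 : Continuous fun q : G × G × G × G × G => q.2.1 := continuous_snd.fst
  have c3 : Continuous fun q : G × G × G × G × G => q.2.2.1 := continuous_snd.snd.fst
  have c4 : Continuous fun q : G × G × G × G × G => q.2.2.2.1 := continuous_snd.snd.snd.fst
  have c5 : Continuous fun q : G × G × G × G × G => q.2.2.2.2 := continuous_snd.snd.snd.snd
  have hcont : Continuous (fun q : G × G × G × G × G =>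
      ∸(q.1 ⊹ q.2.1) ⊹ (q.2.2.1 ⊹ (q.2.2.2.1 ⊹ q.2.2.2.2))) :=
    cont_add (cont_neg (cont_add c1 c2)) (cont_add c3 (cont_add c4 c5))
  have hval : ∸((𝟘 : G) ⊹ 𝟘) ⊹ (𝟘 ⊹ (𝟘 ⊹ 𝟘)) = (𝟘 : G) := by
    rw [Gyrogroup.zero_add, Gyrogroup.zero_add, neg_zero]
    exact Gyrogroup.zero_add 𝟘
  have hT : (fun q : G × G × G × G × G =>
      ∸(q.1 ⊹ q.2.1) ⊹ (q.2.2.1 ⊹ (q.2.2.2.1 ⊹ q.2.2.2.2))) ⁻¹' S ∈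
      𝓝 (((𝟘 : G), (𝟘 : G), (𝟘 : G), (𝟘 : G), (𝟘 : G))) := by
    have hca := hcont.continuousAt
      (x := (((𝟘 : G), (𝟘 : G), (𝟘 : G), (𝟘 : G), (𝟘 : G))))
    exact hca (show S ∈ 𝓝 (∸((𝟘 : G) ⊹ 𝟘) ⊹ (𝟘 ⊹ (𝟘 ⊹ 𝟘))) by rw [hval]; exact hS)
  rw [mem_nhds_prod_iff] at hT
  obtain ⟨A1, hA1, B1, hB1, hs1⟩ := hT
  rw [mem_nhds_prod_iff] at hB1
  obtain ⟨A2, hA2, B2, hB2, hs2⟩ := hB1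
  rw [mem_nhds_prod_iff] at hB2
  obtain ⟨A3, hA3, B3, hB3, hs3⟩ := hB2
  rw [mem_nhds_prod_iff] at hB3
  obtain ⟨A4, hA4, B4, hB4, hs4⟩ := hB3
  obtain ⟨V, hVb, hV⟩ := shrink (Filter.inter_mem hA1 (Filter.inter_mem hA2
    (Filter.inter_mem hA3 (Filter.inter_mem hA4 hB4))))
  refine ⟨V, hVb, fun u₁ h1 u₂ h2 p hp u₃ h3 u₄ h4 => ?_⟩
  exact hs1 (Set.mk_mem_prod (hV h1).1 (hs2 (Set.mk_mem_prod (hV h2).2.1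
    (hs3 (Set.mk_mem_prod (hV hp).2.2.1 (hs4 (Set.mk_mem_prod (hV h3).2.2.2.1
      (hV h4).2.2.2.2)))))))

theorem gyr_mem_basis_rev {U : Set G} (hU : U ∈ bas G) (a b : G) {x : G}
    (hx : γ a b x ∈ U) : x ∈ U := by
  obtain ⟨u, hu, hux⟩ := gyr_surj_basis hU a b hx
  rwa [← (Gyrogroup.gyr_bijective a b).1 hux]

end Basis

section Coset
variable {G : Type*} [TopologicalSpace G] [StrongTopGyrogroup G]

local infixl:65 " ⊹ " => Gyrogroup.add
local prefix:100 "∸" => Gyrogroup.neg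
local notation "𝟘" => Gyrogroup.zero
local notation "γ" => Gyrogroup.gyr

/-- The quotient map onto the coset space. -/
def pr (H : Set G) : G → CosetSpace G H := Quotient.mk (cosetSetoid G H)

theorem mem_of_gyr_set {H : Set G} (hHgyr : ∀ x y : G, γ x y '' H = H) (x y : G) {h : G}
    (hh : h ∈ H) : γ x y h ∈ H := by
  rw [← hHgyr x y]; exact Set.mem_image_of_mem _ hh

theorem gyr_surj_set {H : Set G} (hHgyr : ∀ x y : G, γ x y '' H = H) (x y : G) {h : G}
    (hh : h ∈ H) : ∃ h' ∈ H, γ x y h' = h := by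
  rw [← hHgyr x y] at hh; exact hh

theorem pr_eq_iff {H : Set G} (hH0 : (𝟘 : G) ∈ H) (hHneg : ∀ a ∈ H, ∸a ∈ H)
    (hHadd : ∀ a ∈ H, ∀ b ∈ H, a ⊹ b ∈ H) (hHgyr : ∀ x y : G, γ x y '' H = H)
    {a b : G} : pr H a = pr H b ↔ ∸a ⊹ b ∈ H := by
  constructor
  · intro h
    have him : Gyrogroup.add a '' H = Gyrogroup.add b '' H := Quotient.exact h
    have hb : b ∈ Gyrogroup.add a '' H := by
      rw [him]
      exact ⟨𝟘, hH0, Gyrogroup.add_zero b⟩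
    obtain ⟨h', hh', hab⟩ := hb
    have : ∸a ⊹ b = h' := by rw [← hab]; exact neg_add_cancel_left a h'
    rwa [this]
  · intro h0mem
    apply Quotient.sound
    show Gyrogroup.add a '' H = Gyrogroup.add b '' H
    set h₀ := ∸a ⊹ b with hh₀
    have hab : a ⊹ h₀ = b := add_neg_cancel_left a b
    ext y
    constructor
    · rintro ⟨h, hh, rfl⟩
      refine ⟨γ a h₀ (∸h₀ ⊹ h), mem_of_gyr_set hHgyr a h₀ (hHadd _ (hHneg _ h0mem) _ hh), ?_⟩
      show b ⊹ γ a h₀ (∸h₀ ⊹ h) = a ⊹ h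
      rw [← hab, ← Gyrogroup.left_gyroassoc, add_neg_cancel_left]
    · rintro ⟨h, hh, rfl⟩
      obtain ⟨h', hh', hgh⟩ := gyr_surj_set hHgyr a h₀ hh
      refine ⟨h₀ ⊹ h', hHadd _ h0mem _ hh', ?_⟩
      show a ⊹ (h₀ ⊹ h') = b ⊹ h
      rw [Gyrogroup.left_gyroassoc, hgh, hab]

theorem isQuotientMap_pr (H : Set G) : IsQuotientMap (pr (G := G) H) := by
  letI : Setoid G := cosetSetoid G H
  exact isQuotientMap_quotient_mk'

theorem continuous_pr (H : Set G) : Continuous (pr (G := G) H) :=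
  (isQuotientMap_pr H).continuous

theorem preimage_image_pr {H : Set G} (hH0 : (𝟘 : G) ∈ H) (hHneg : ∀ a ∈ H, ∸a ∈ H)
    (hHadd : ∀ a ∈ H, ∀ b ∈ H, a ⊹ b ∈ H) (hHgyr : ∀ x y : G, γ x y '' H = H)
    (S : Set G) : pr H ⁻¹' (pr H '' S) = ⋃ h ∈ H, (fun x => x ⊹ h) ⁻¹' S := by
  ext b
  simp only [Set.mem_preimage, Set.mem_image, Set.mem_iUnion]
  constructor
  · rintro ⟨a, haS, hab⟩
    have h1 : pr H b = pr H a := hab.symm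
    have h2 : ∸b ⊹ a ∈ H := (pr_eq_iff hH0 hHneg hHadd hHgyr).1 h1
    exact ⟨∸b ⊹ a, h2, by show b ⊹ (∸b ⊹ a) ∈ S; rwa [add_neg_cancel_left]⟩
  · rintro ⟨h, hh, hbS⟩
    refine ⟨b ⊹ h, hbS, ?_⟩
    have : pr H b = pr H (b ⊹ h) := by
      rw [pr_eq_iff hH0 hHneg hHadd hHgyr, neg_add_cancel_left]
      exact hh
    exact this.symm

theorem isOpenMap_pr {H : Set G} (hH0 : (𝟘 : G) ∈ H) (hHneg : ∀ a ∈ H, ∸a ∈ H)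
    (hHadd : ∀ a ∈ H, ∀ b ∈ H, a ⊹ b ∈ H) (hHgyr : ∀ x y : G, γ x y '' H = H) :
    IsOpenMap (pr (G := G) H) := by
  intro S hS
  rw [← (isQuotientMap_pr H).isOpen_preimage]
  rw [preimage_image_pr hH0 hHneg hHadd hHgyr]
  exact isOpen_biUnion fun h _ => hS.preimage (cont_add_right h)

theorem admissible_props {H : Set G} (hadm : AdmissibleFromBasis G H) :
    (𝟘 : G) ∈ H ∧ (∀ a ∈ H, ∸a ∈ H) ∧ (∀ a ∈ H, ∀ b ∈ H, a ⊹ b ∈ H) ∧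
      (∀ x y : G, γ x y '' H = H) ∧ IsClosed H := by
  obtain ⟨Us, hUb, hchain, hHeq⟩ := hadm
  subst hHeq
  have hsub : ∀ n, (⋂ m, Us m) ⊆ Us n := fun n => Set.iInter_subset _ n
  refine ⟨?_, ?_, ?_, ?_, ?_⟩
  · exact Set.mem_iInter.2 fun n => zero_mem_basis (hUb n)
  · intro a ha
    exact Set.mem_iInter.2 fun n => neg_mem_basis (hUb n) (Set.mem_iInter.1 ha n)
  · intro a ha b hb
    refine Set.mem_iInter.2 fun n => ?_
    have h1 : b ⊹ 𝟘 ∈ Set.image2 Gyrogroup.add (Us (n+1)) (Us (n+1)) :=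
      Set.mem_image2_of_mem (Set.mem_iInter.1 hb (n+1)) (zero_mem_basis (hUb (n+1)))
    have h2 : a ⊹ (b ⊹ 𝟘) ∈ Us n :=
      hchain n (Set.mem_image2_of_mem (Set.mem_iInter.1 ha (n+1)) h1)
    rwa [Gyrogroup.add_zero] at h2
  · intro x y
    ext z
    constructor
    · rintro ⟨p, hp, rfl⟩
      exact Set.mem_iInter.2 fun n => gyr_mem_basis (hUb n) x y (Set.mem_iInter.1 hp n)
    · intro hz
      obtain ⟨p, -, hpz⟩ := gyr_surj_basis (hUb 0) x y (Set.mem_iInter.1 hz 0)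
      refine ⟨p, Set.mem_iInter.2 fun n => ?_, hpz⟩
      apply gyr_mem_basis_rev (hUb n) x y
      rw [hpz]
      exact Set.mem_iInter.1 hz n
  · apply isClosed_of_closure_subset
    intro x hx
    refine Set.mem_iInter.2 fun n => ?_
    obtain ⟨s, hs, v, hv, rfl⟩ := mem_closure_decomp (hUb (n+1)) hx
    have h1 : v ⊹ 𝟘 ∈ Set.image2 Gyrogroup.add (Us (n+1)) (Us (n+1)) :=
      Set.mem_image2_of_mem hv (zero_mem_basis (hUb (n+1)))
    have h2 : s ⊹ (v ⊹ 𝟘) ∈ Us n :=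
      hchain n (Set.mem_image2_of_mem (Set.mem_iInter.1 hs (n+1)) h1)
    rwa [Gyrogroup.add_zero] at h2

end Coset

section Main
variable {G : Type*} [TopologicalSpace G] [StrongTopGyrogroup G]

local infixl:65 " ⊹ " => Gyrogroup.add
local prefix:100 "∸" => Gyrogroup.neg
local notation "𝟘" => Gyrogroup.zero
local notation "γ" => Gyrogroup.gyr

variable {H : Set G} (hH0 : (𝟘 : G) ∈ H) (hHneg : ∀ a ∈ H, ∸a ∈ H)
  (hHadd : ∀ a ∈ H, ∀ b ∈ H, a ⊹ b ∈ H) (hHgyr : ∀ x y : G, γ x y '' H = H)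
  (hHcl : IsClosed H)
variable {U W₂ K : Set G} (hUb : U ∈ bas G) (hW₂b : W₂ ∈ bas G) (hKcp : IsCompact K)
  (hHWK : H ∩ W₂ ⊆ K)
  (hE2 : ∀ u₁ ∈ U, ∀ u₂ ∈ U, ∀ p ∈ U, ∀ u₃ ∈ U, ∀ u₄ ∈ U,
    ∸(u₁ ⊹ u₂) ⊹ (p ⊹ (u₃ ⊹ u₄)) ∈ W₂)

include hUb in
theorem mem_closure_gyr (x y : G) {c : G} (hc : c ∈ closure U) :
    γ x y c ∈ closure U := by
  have h2 : γ x y '' closure U ⊆ closure (γ x y '' U) :=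
    image_closure_subset_closure_image (cont_gyr x y)
  rw [StrongTopGyrogroup.basis_gyr U hUb x y] at h2
  exact h2 (Set.mem_image_of_mem _ hc)

include hH0 hHneg hHadd hHgyr hHcl hUb hW₂b hKcp hHWK hE2 in
/-- The key perfectness property: the image under `pr H` of a closed subset of
`closure U` is closed. -/
theorem image_closed {C : Set G} (hC : IsClosed C) (hCU : C ⊆ closure U) :
    IsClosed (pr H '' C) := by
  rw [← (isQuotientMap_pr H).isClosed_preimage]
  apply isClosed_of_closure_subset
  intro b hb
  -- witnesses
  have hwit : ∀ V ∈ 𝓝 (𝟘 : G), ∃ v c, v ∈ V ∧ c ∈ C ∧ ∸(b ⊹ v) ⊹ c ∈ H := by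
    intro V hV
    have hc : ContinuousAt (fun y : G => ∸b ⊹ y) b := (cont_add_left (∸b)).continuousAt
    have hN : (fun y : G => ∸b ⊹ y) ⁻¹' V ∈ 𝓝 b :=
      hc (show V ∈ 𝓝 (∸b ⊹ b) by rw [Gyrogroup.neg_add]; exact hV)
    obtain ⟨x, hxN, hxC⟩ := mem_closure_iff_nhds.mp hb _ hN
    obtain ⟨c, hcC, hpc⟩ := hxC
    refine ⟨∸b ⊹ x, c, hxN, hcC, ?_⟩
    have hbv : b ⊹ (∸b ⊹ x) = x := add_neg_cancel_left b x
    rw [hbv]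
    have : pr H x = pr H c := hpc.symm
    exact (pr_eq_iff hH0 hHneg hHadd hHgyr).1 this
  -- choose V₀ adapted to b
  have hψ : Continuous fun p : G × G => (b ⊹ p.1) ⊹ ∸(b ⊹ p.2) :=
    cont_add (cont_add continuous_const continuous_fst)
      (cont_neg (cont_add continuous_const continuous_snd))
  have hψ0 : (b ⊹ (𝟘 : G)) ⊹ ∸(b ⊹ (𝟘 : G)) = (𝟘 : G) := by
    rw [Gyrogroup.add_zero, Gyrogroup.add_neg]
  obtain ⟨V₀, hV₀b, hη⟩ : ∃ V₀ ∈ bas G, ∀ v' ∈ V₀, ∀ v ∈ V₀, (b ⊹ v') ⊹ ∸(b ⊹ v) ∈ U := by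
    have hT : (fun p : G × G => (b ⊹ p.1) ⊹ ∸(b ⊹ p.2)) ⁻¹' U ∈ 𝓝 ((𝟘 : G), (𝟘 : G)) := by
      have hca := hψ.continuousAt (x := ((𝟘 : G), (𝟘 : G)))
      exact hca (show U ∈ 𝓝 ((b ⊹ (𝟘:G)) ⊹ ∸(b ⊹ (𝟘:G))) by rw [hψ0]; exact basis_nhds hUb)
    rw [nhds_prod_eq, Filter.mem_prod_iff] at hT
    obtain ⟨A, hA, B, hB, hAB⟩ := hT
    obtain ⟨V, hVb, hV⟩ := shrink (Filter.inter_mem hA hB)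
    exact ⟨V, hVb, fun v' hv' v hv => hAB (Set.mk_mem_prod (hV hv').1 (hV hv).2)⟩
  -- first witness
  obtain ⟨v₁, c₁, hv₁, hc₁C, hh₁H⟩ := hwit V₀ (basis_nhds hV₀b)
  set h₁ := ∸(b ⊹ v₁) ⊹ c₁ with hh₁def
  -- boundedness
  have hbound : ∀ v ∈ V₀, ∀ c ∈ C, ∸h₁ ⊹ (∸(b ⊹ v) ⊹ c) ∈ W₂ := by
    intro v hv c hcC
    set A := b ⊹ v with hA
    set A' := b ⊹ v₁ with hA'
    set Z := A' ⊹ (∸A ⊹ c) with hZ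
    have hstep1 : ∸h₁ ⊹ (∸A ⊹ c) = γ (∸A') c₁ (∸c₁ ⊹ Z) := by
      have h2 : ∸A ⊹ c = ∸A' ⊹ Z := (neg_add_cancel_left A' (∸A ⊹ c)).symm
      rw [h2, hh₁def]
      exact neg_add_of_add (∸A') c₁ Z
    have hZ2 : Z = ((b ⊹ v₁) ⊹ ∸(b ⊹ v)) ⊹ γ A' (∸A) c := by
      rw [hZ, Gyrogroup.left_gyroassoc]
    have hηU : (b ⊹ v₁) ⊹ ∸(b ⊹ v) ∈ U := hη v₁ hv₁ v hv
    have hch : γ A' (∸A) c ∈ closure U := mem_closure_gyr hUb A' (∸A) (hCU hcC)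
    obtain ⟨u₁, hu₁, u₂, hu₂, hc₁eq⟩ := mem_closure_decomp hUb (hCU hc₁C)
    obtain ⟨u₃, hu₃, u₄, hu₄, hcheq⟩ := mem_closure_decomp hUb hch
    have hW : ∸c₁ ⊹ Z ∈ W₂ := by
      rw [hZ2, hc₁eq, hcheq]
      exact hE2 u₁ hu₁ u₂ hu₂ _ hηU u₃ hu₃ u₄ hu₄
    rw [hstep1]
    exact gyr_mem_basis hW₂b _ _ hW
  -- witnesses live in a fixed compact set
  set K' := (fun y : G => h₁ ⊹ y) '' K with hK'def
  have hK'cp : IsCompact K' := hKcp.image (cont_add_left h₁)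
  have hKmem : ∀ v ∈ V₀, ∀ c ∈ C, ∸(b ⊹ v) ⊹ c ∈ H → ∸(b ⊹ v) ⊹ c ∈ K' := by
    intro v hv c hcC hmemH
    have hξW : ∸h₁ ⊹ (∸(b ⊹ v) ⊹ c) ∈ W₂ := hbound v hv c hcC
    have hξH : ∸h₁ ⊹ (∸(b ⊹ v) ⊹ c) ∈ H := hHadd _ (hHneg _ hh₁H) _ hmemH
    refine ⟨∸h₁ ⊹ (∸(b ⊹ v) ⊹ c), hHWK ⟨hξH, hξW⟩, ?_⟩
    exact add_neg_cancel_left h₁ _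
  -- the family of witness sets
  set Cc : Set G → Set G := fun V => {h | h ∈ H ∧ ∃ v ∈ V ∩ V₀, ∃ c ∈ C, h = ∸(b ⊹ v) ⊹ c}
    with hCcdef
  have hCcne : ∀ V ∈ 𝓝 (𝟘 : G), (Cc V).Nonempty := by
    intro V hV
    obtain ⟨v, c, hv, hcC, hmH⟩ := hwit (V ∩ V₀) (Filter.inter_mem hV (basis_nhds hV₀b))
    exact ⟨∸(b ⊹ v) ⊹ c, hmH, v, hv, c, hcC, rfl⟩
  have hCcK' : ∀ V, Cc V ⊆ K' := by
    rintro V h ⟨hmH, v, hv, c, hcC, rfl⟩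
    exact hKmem v hv.2 c hcC hmH
  have hCcH : ∀ V, Cc V ⊆ H := fun V h hh => hh.1
  have hCcmono : ∀ {V V' : Set G}, V ⊆ V' → Cc V ⊆ Cc V' := by
    rintro V V' hVV h ⟨hmH, v, hv, c, hcC, rfl⟩
    exact ⟨hmH, v, ⟨hVV hv.1, hv.2⟩, c, hcC, rfl⟩
  -- cluster point
  obtain ⟨h', hh'K', hh'cl⟩ :
      ∃ h', h' ∈ K' ∧ ∀ V : Set G, V ∈ 𝓝 (𝟘 : G) → h' ∈ closure (Cc V) := by
    by_contra hcon
    push_neg at hcon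
    have hempty : K' ∩ ⋂ i : {V : Set G // V ∈ 𝓝 (𝟘 : G)}, closure (Cc i.val) = ∅ := by
      rw [Set.eq_empty_iff_forall_notMem]
      rintro x ⟨hxK', hxI⟩
      obtain ⟨V, hV, hnot⟩ := hcon x hxK'
      exact hnot (Set.mem_iInter.1 hxI ⟨V, hV⟩)
    obtain ⟨t, ht⟩ := hK'cp.elim_finite_subfamily_closed _
      (fun i : {V : Set G // V ∈ 𝓝 (𝟘 : G)} => isClosed_closure) hempty
    have hT : (⋂ i ∈ t, (i : {V : Set G // V ∈ 𝓝 (𝟘 : G)}).val) ∈ 𝓝 (𝟘 : G) := by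
      refine (Filter.biInter_mem t.finite_toSet).mpr ?_
      exact fun i _ => i.property
    obtain ⟨h, hhmem⟩ := hCcne _ hT
    have hhK' : h ∈ K' := hCcK' _ hhmem
    have : h ∈ ⋂ i ∈ t, closure (Cc (i : {V : Set G // V ∈ 𝓝 (𝟘 : G)}).val) := by
      refine Set.mem_iInter₂.2 fun i hi => ?_
      apply subset_closure
      refine hCcmono ?_ hhmem
      exact Set.biInter_subset_of_mem hi
    rw [Set.eq_empty_iff_forall_notMem] at ht
    exact ht h ⟨hhK', this⟩
  have hh'H : h' ∈ H := by
    have h1 : h' ∈ closure (Cc Set.univ) := hh'cl _ Filter.univ_mem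
    have h2 : closure (Cc Set.univ) ⊆ closure H := closure_mono (hCcH _)
    rw [hHcl.closure_eq] at h2
    exact h2 h1
  -- b ⊹ h' belongs to C
  have hbC : b ⊹ h' ∈ C := by
    apply hC.closure_subset
    rw [mem_closure_iff_nhds]
    intro T hT
    have hΨ : Continuous fun p : G × G => (b ⊹ p.1) ⊹ p.2 :=
      cont_add (cont_add continuous_const continuous_fst) continuous_snd
    have hΨ0 : (b ⊹ (𝟘 : G)) ⊹ h' = b ⊹ h' := by rw [Gyrogroup.add_zero]
    have hT' : (fun p : G × G => (b ⊹ p.1) ⊹ p.2) ⁻¹' T ∈ 𝓝 ((𝟘 : G), h') := by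
      have hca := hΨ.continuousAt (x := ((𝟘 : G), h'))
      exact hca (show T ∈ 𝓝 ((b ⊹ (𝟘:G)) ⊹ h') by rw [hΨ0]; exact hT)
    rw [nhds_prod_eq, Filter.mem_prod_iff] at hT'
    obtain ⟨V₂, hV₂, N₂, hN₂, hVN⟩ := hT'
    obtain ⟨h, hhN₂, hhCc⟩ := mem_closure_iff_nhds.mp (hh'cl V₂ hV₂) _ hN₂
    obtain ⟨hmH, v, hv, c, hcC, hceq⟩ := hhCc
    have hc2 : c = (b ⊹ v) ⊹ h := by rw [hceq, add_neg_cancel_left]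
    refine ⟨c, ?_, hcC⟩
    rw [hc2]
    exact hVN (Set.mk_mem_prod hv.1 hhN₂)
  refine ⟨b ⊹ h', hbC, ?_⟩
  have : pr H b = pr H (b ⊹ h') := by
    rw [pr_eq_iff hH0 hHneg hHadd hHgyr, neg_add_cancel_left]
    exact hh'H
  exact this.symm

include hUb hW₂b hKcp hHWK hE2 hHcl hH0 hHneg hHadd hHgyr in
theorem fiber_compact {z : G} (hz : z ∈ closure U) :
    IsCompact {y | y ∈ closure U ∧ pr H y = pr H z} := by
  set S := H ∩ (fun s : G => z ⊹ s) ⁻¹' (closure U) with hSdef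
  have hScl : IsClosed S := hHcl.inter (isClosed_closure.preimage (cont_add_left z))
  have hSK : S ⊆ K := by
    rintro s ⟨hsH, hszU⟩
    obtain ⟨u₁, hu₁, u₂, hu₂, hzeq⟩ := mem_closure_decomp hUb hz
    obtain ⟨u₃, hu₃, u₄, hu₄, hzseq⟩ := mem_closure_decomp hUb (show z ⊹ s ∈ closure U from hszU)
    have hs1 : s = ∸z ⊹ (z ⊹ s) := (neg_add_cancel_left z s).symm
    have hs2 : s ∈ W₂ := by
      have h3 := hE2 u₁ hu₁ u₂ hu₂ 𝟘 (zero_mem_basis hUb) u₃ hu₃ u₄ hu₄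
      rw [Gyrogroup.zero_add] at h3
      rw [hs1, hzseq, hzeq]
      exact h3
    exact hHWK ⟨hsH, hs2⟩
  have hScp : IsCompact S := hKcp.of_isClosed_subset hScl hSK
  have himg : {y | y ∈ closure U ∧ pr H y = pr H z} = (fun s : G => z ⊹ s) '' S := by
    ext y
    constructor
    · rintro ⟨hyU, hpy⟩
      refine ⟨∸z ⊹ y, ⟨?_, ?_⟩, add_neg_cancel_left z y⟩
      · exact (pr_eq_iff hH0 hHneg hHadd hHgyr).1 hpy.symm
      · show z ⊹ (∸z ⊹ y) ∈ closure U
        rw [add_neg_cancel_left]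
        exact hyU
    · rintro ⟨s, ⟨hsH, hsU⟩, rfl⟩
      refine ⟨hsU, ?_⟩
      have : pr H z = pr H (z ⊹ s) := by
        rw [pr_eq_iff hH0 hHneg hHadd hHgyr, neg_add_cancel_left]
        exact hsH
      exact this.symm
  rw [himg]
  exact hScp.image (cont_add_left z)

include hUb hW₂b hKcp hHWK hE2 hHcl hH0 hHneg hHadd hHgyr in
theorem fiber_seq_compact (hmet : TopologicalSpace.MetrizableSpace H) {z : G}
    (hz : z ∈ closure U) (f : ℕ → G)
    (hf : ∀ n, f n ∈ closure U ∧ pr H (f n) = pr H z) :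
    ∃ a, (a ∈ closure U ∧ pr H a = pr H z) ∧
      ∃ φ : ℕ → ℕ, StrictMono φ ∧ Tendsto (f ∘ φ) atTop (𝓝 a) := by
  classical
  set S := H ∩ (fun s : G => z ⊹ s) ⁻¹' (closure U) with hSdef
  have hScl : IsClosed S := hHcl.inter (isClosed_closure.preimage (cont_add_left z))
  have hSK : S ⊆ K := by
    rintro s ⟨hsH, hszU⟩
    obtain ⟨u₁, hu₁, u₂, hu₂, hzeq⟩ := mem_closure_decomp hUb hz
    obtain ⟨u₃, hu₃, u₄, hu₄, hzseq⟩ := mem_closure_decomp hUb (show z ⊹ s ∈ closure U from hszU)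
    have hs1 : s = ∸z ⊹ (z ⊹ s) := (neg_add_cancel_left z s).symm
    have hs2 : s ∈ W₂ := by
      have h3 := hE2 u₁ hu₁ u₂ hu₂ 𝟘 (zero_mem_basis hUb) u₃ hu₃ u₄ hu₄
      rw [Gyrogroup.zero_add] at h3
      rw [hs1, hzseq, hzeq]
      exact h3
    exact hHWK ⟨hsH, hs2⟩
  have hScp : IsCompact S := hKcp.of_isClosed_subset hScl hSK
  haveI : TopologicalSpace.MetrizableSpace H := hmet
  haveI : TopologicalSpace.MetrizableSpace ↥S :=
    (Topology.IsEmbedding.inclusion (Set.inter_subset_left :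
      S ⊆ H)).metrizableSpace
  haveI : CompactSpace ↥S := isCompact_iff_compactSpace.mp hScp
  have hmemS : ∀ n, ∸z ⊹ f n ∈ S := by
    intro n
    refine ⟨(pr_eq_iff hH0 hHneg hHadd hHgyr).1 (hf n).2.symm, ?_⟩
    show z ⊹ (∸z ⊹ f n) ∈ closure U
    rw [add_neg_cancel_left]
    exact (hf n).1
  set g : ℕ → ↥S := fun n => ⟨∸z ⊹ f n, hmemS n⟩ with hgdef
  obtain ⟨a, φ, hφ, hten⟩ := SeqCompactSpace.tendsto_subseq g
  have hcont : Continuous fun w : ↥S => z ⊹ (w : G) :=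
    (cont_add_left z).comp continuous_subtype_val
  have hten2 : Tendsto (fun j => z ⊹ ((g (φ j)) : G)) atTop (𝓝 (z ⊹ (a : G))) :=
    (hcont.tendsto a).comp hten
  have heqf : (fun j => z ⊹ ((g (φ j)) : G)) = f ∘ φ := by
    funext j
    exact add_neg_cancel_left z (f (φ j))
  rw [heqf] at hten2
  refine ⟨z ⊹ (a : G), ⟨a.2.2, ?_⟩, φ, hφ, hten2⟩
  have : pr H z = pr H (z ⊹ (a : G)) := by
    rw [pr_eq_iff hH0 hHneg hHadd hHgyr, neg_add_cancel_left]
    exact a.2.1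
  exact this.symm

include hUb hW₂b hKcp hHWK hE2 hHcl hH0 hHneg hHadd hHgyr in
theorem cluster_point_of_tendsto {c : ℕ → G} (hc : ∀ n, c n ∈ closure U)
    {q : CosetSpace G H} (hq : Tendsto (fun n => pr H (c n)) atTop (𝓝 q)) :
    ∃ z, (z ∈ closure U ∧ pr H z = q) ∧
      ∀ O : Set G, IsOpen O → z ∈ O → ∀ N, ∃ n, N ≤ n ∧ c n ∈ O := by
  classical
  set D : ℕ → Set G := fun N => closure {x | ∃ n, N ≤ n ∧ c n = x} with hDdef
  set Fq := {y | y ∈ closure U ∧ pr H y = q} with hFqdef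
  have hcase : ∀ N, (Fq ∩ D N).Nonempty := by
    intro N
    by_contra hemp
    rw [Set.not_nonempty_iff_eq_empty] at hemp
    have hE : IsClosed (closure U ∩ D N) := isClosed_closure.inter isClosed_closure
    have him : IsClosed (pr H '' (closure U ∩ D N)) :=
      image_closed hH0 hHneg hHadd hHgyr hHcl hUb hW₂b hKcp hHWK hE2 hE
        Set.inter_subset_left
    have hqQ : q ∈ (pr H '' (closure U ∩ D N))ᶜ := by
      intro hqmem
      obtain ⟨y, ⟨hyU, hyD⟩, hpy⟩ := hqmem
      have : y ∈ Fq ∩ D N := ⟨⟨hyU, hpy⟩, hyD⟩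
      rw [hemp] at this
      exact this
    have hev : ∀ᶠ n in atTop, pr H (c n) ∈ (pr H '' (closure U ∩ D N))ᶜ :=
      hq (him.isOpen_compl.mem_nhds hqQ)
    obtain ⟨n, hn1, hn2⟩ := (hev.and (Filter.eventually_ge_atTop N)).exists
    exact hn1 ⟨c n, ⟨hc n, subset_closure ⟨n, hn2, rfl⟩⟩, rfl⟩
  obtain ⟨z₀, hz₀F, -⟩ := hcase 0
  have hFq_eq : Fq = {y | y ∈ closure U ∧ pr H y = pr H z₀} := by
    ext y
    rw [hFqdef]
    simp only [Set.mem_setOf_eq]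
    rw [hz₀F.2]
  have hFcp : IsCompact Fq := by
    rw [hFq_eq]
    exact fiber_compact hH0 hHneg hHadd hHgyr hHcl hUb hW₂b hKcp hHWK hE2 hz₀F.1
  have hFcl : IsClosed Fq := by
    have : Fq = closure U ∩ (fun y : G => ∸z₀ ⊹ y) ⁻¹' H := by
      ext y
      simp only [hFqdef, Set.mem_setOf_eq, Set.mem_inter_iff, Set.mem_preimage]
      constructor
      · rintro ⟨hyU, hpy⟩
        refine ⟨hyU, ?_⟩
        exact (pr_eq_iff hH0 hHneg hHadd hHgyr).1 (hz₀F.2.trans hpy.symm)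
      · rintro ⟨hyU, hmem⟩
        refine ⟨hyU, ?_⟩
        have : pr H z₀ = pr H y := (pr_eq_iff hH0 hHneg hHadd hHgyr).2 hmem
        rw [← this, hz₀F.2]
    rw [this]
    exact isClosed_closure.inter (hHcl.preimage (cont_add_left (∸z₀)))
  set Z : ℕ → Set G := fun N => Fq ∩ D N with hZdef
  have hZdec : ∀ N, Z (N+1) ⊆ Z N := by
    intro N
    apply Set.inter_subset_inter_right
    apply closure_mono
    rintro x ⟨n, hn, rfl⟩
    exact ⟨n, Nat.le_of_succ_le hn, rfl⟩
  have hZcl : ∀ N, IsClosed (Z N) := fun N => hFcl.inter isClosed_closure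
  have hZ0 : IsCompact (Z 0) := hFcp.inter_right isClosed_closure
  obtain ⟨z, hz⟩ := IsCompact.nonempty_iInter_of_sequence_nonempty_isCompact_isClosed
    Z hZdec hcase hZ0 hZcl
  have hzmem : ∀ N, z ∈ Z N := Set.mem_iInter.1 hz
  refine ⟨z, (hzmem 0).1, ?_⟩
  intro O hO hzO N
  have hzD : z ∈ D N := (hzmem N).2
  obtain ⟨x, hxO, n, hnN, rfl⟩ := mem_closure_iff_nhds.mp hzD O (hO.mem_nhds hzO)
  exact ⟨n, hnN, hxO⟩

include hUb hW₂b hKcp hHWK hE2 hHcl hH0 hHneg hHadd hHgyr in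
theorem rel_base (hmet : TopologicalSpace.MetrizableSpace H) {z : G} (hzU : z ∈ closure U)
    {O : Set G} (hO : IsOpen O) (hzO : z ∈ O)
    {Wf Vf : ℕ → Set G} (hWfb : ∀ k, Wf k ∈ bas G)
    (hpair : ∀ k, ∀ x ∈ Wf k, ∀ y ∈ Wf k, x ⊹ y ∈ Vf k)
    (hsep : ∀ x ∈ H, (∀ k, x ∈ Vf k) → x = (𝟘 : G))
    (hWdec : ∀ k, Wf (k+1) ⊆ Wf k) :
    ∃ k, ∃ Q : Set (CosetSpace G H), IsOpen Q ∧ pr H z ∈ Q ∧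
      ∀ y, y ∈ closure U → ∸z ⊹ y ∈ Wf k → pr H y ∈ Q → y ∈ O := by
  classical
  by_contra hcon
  push_neg at hcon
  set T : ℕ → Set G := fun k => {y | ∸z ⊹ y ∈ Wf k} \ O with hTdef
  set E : ℕ → Set G := fun k => closure U ∩ closure (T k) with hEdef
  have hEcl : ∀ k, IsClosed (E k) := fun k => isClosed_closure.inter isClosed_closure
  have hEim : ∀ k, IsClosed (pr H '' E k) := fun k =>
    image_closed hH0 hHneg hHadd hHgyr hHcl hUb hW₂b hKcp hHWK hE2 (hEcl k)
      Set.inter_subset_left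
  have hfib : ∀ k, ∃ y, y ∈ E k ∧ pr H y = pr H z := by
    intro k
    by_contra hnot
    push_neg at hnot
    have hzQ : pr H z ∈ (pr H '' E k)ᶜ := by
      intro hmem
      obtain ⟨y, hyE, hpy⟩ := hmem
      exact hnot y hyE hpy
    obtain ⟨y, hyU, hyW, hyQ, hyO⟩ := hcon k _ (hEim k).isOpen_compl hzQ
    exact hyQ ⟨y, ⟨hyU, subset_closure ⟨hyW, hyO⟩⟩, rfl⟩
  choose f hfE hfpr using hfib
  have hffib : ∀ k, f k ∈ closure U ∧ pr H (f k) = pr H z := fun k => ⟨(hfE k).1, hfpr k⟩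
  obtain ⟨a, ⟨haU, hapr⟩, φ, hφ, hten⟩ :=
    fiber_seq_compact hH0 hHneg hHadd hHgyr hHcl hUb hW₂b hKcp hHWK hE2 hmet hzU f hffib
  have hTdec : ∀ k, T (k+1) ⊆ T k := fun k y hy => ⟨hWdec k hy.1, hy.2⟩
  have hTanti : Antitone fun k => closure (T k) :=
    antitone_nat_of_succ_le fun k => closure_mono (hTdec k)
  have haT : ∀ k, a ∈ closure (T k) := by
    intro k
    apply isClosed_closure.mem_of_tendsto hten
    filter_upwards [Filter.eventually_ge_atTop k] with j hj
    have hk : k ≤ φ j := le_trans hj hφ.le_apply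
    exact hTanti hk (hfE (φ j)).2
  have haH : ∸z ⊹ a ∈ H := (pr_eq_iff hH0 hHneg hHadd hHgyr).1 hapr.symm
  have haV : ∀ k, ∸z ⊹ a ∈ Vf k := by
    intro k
    obtain ⟨s, hsT, w, hw, haeq⟩ := mem_closure_decomp (hWfb k) (haT k)
    obtain ⟨w₃, hw₃, hgw⟩ := gyr_surj_basis (hWfb k) z (∸z ⊹ s) hw
    have h5 : a = z ⊹ ((∸z ⊹ s) ⊹ w₃) := by
      rw [Gyrogroup.left_gyroassoc z (∸z ⊹ s) w₃, add_neg_cancel_left, hgw]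
      exact haeq
    have h6 : ∸z ⊹ a = (∸z ⊹ s) ⊹ w₃ := by rw [h5, neg_add_cancel_left]
    rw [h6]
    exact hpair k _ hsT.1 _ hw₃
  have ha0 : ∸z ⊹ a = (𝟘 : G) := hsep _ haH haV
  have haz : a = z := by
    have h7 : z ⊹ (∸z ⊹ a) = z ⊹ (𝟘 : G) := by rw [ha0]
    rwa [add_neg_cancel_left, Gyrogroup.add_zero] at h7
  have hzT : z ∈ closure (T 0) := haz ▸ haT 0
  obtain ⟨y, hyO', hyT⟩ := mem_closure_iff_nhds.mp hzT O (hO.mem_nhds hzO)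
  exact hyT.2 hyO'

include hUb hW₂b hKcp hHWK hE2 hHcl hH0 hHneg hHadd hHgyr in
theorem image_seqClosed (hseq : SequentialSpace (CosetSpace G H))
    (hmet : TopologicalSpace.MetrizableSpace H)
    {Wf Vf : ℕ → Set G} (hWfb : ∀ k, Wf k ∈ bas G)
    (hpair : ∀ k, ∀ x ∈ Wf k, ∀ y ∈ Wf k, x ⊹ y ∈ Vf k)
    (hsep : ∀ x ∈ H, (∀ k, x ∈ Vf k) → x = (𝟘 : G))
    (hWdec : ∀ k, Wf (k+1) ⊆ Wf k)
    {C : Set G} (hC : IsSeqClosed C) (hCU : C ⊆ closure U) :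
    IsClosed (pr H '' C) := by
  classical
  haveI := hseq
  apply IsSeqClosed.isClosed
  intro x q hmem htend
  choose c hcC hcpr using hmem
  have hcU : ∀ n, c n ∈ closure U := fun n => hCU (hcC n)
  have htend' : Tendsto (fun n => pr H (c n)) atTop (𝓝 q) := by
    have : (fun n => pr H (c n)) = x := funext hcpr
    rw [this]
    exact htend
  obtain ⟨z, ⟨hzU, hzq⟩, hclu⟩ :=
    cluster_point_of_tendsto hH0 hHneg hHadd hHgyr hHcl hUb hW₂b hKcp hHWK hE2 hcU htend'
  have hfreq : ∀ k, ∃ᶠ n in atTop, ∸z ⊹ c n ∈ Wf k := by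
    intro k
    rw [Filter.frequently_atTop]
    intro N
    have hOop : IsOpen {y : G | ∸z ⊹ y ∈ Wf k} := (isOpen_basis (hWfb k)).preimage
      (cont_add_left (∸z))
    have hzmem : z ∈ {y : G | ∸z ⊹ y ∈ Wf k} := by
      show ∸z ⊹ z ∈ Wf k
      rw [Gyrogroup.neg_add]
      exact zero_mem_basis (hWfb k)
    obtain ⟨n, hnN, hcO⟩ := hclu _ hOop hzmem N
    exact ⟨n, hnN, hcO⟩
  obtain ⟨φ, hφ, hφW⟩ := Filter.extraction_forall_of_frequently hfreq
  have hWanti : Antitone Wf := antitone_nat_of_succ_le hWdec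
  have htz : Tendsto (c ∘ φ) atTop (𝓝 z) := by
    rw [tendsto_nhds]
    intro O hO hzO
    obtain ⟨k₀, Q, hQop, hQz, hQprop⟩ :=
      rel_base hH0 hHneg hHadd hHgyr hHcl hUb hW₂b hKcp hHWK hE2 hmet hzU hO hzO hWfb
        hpair hsep hWdec
    have hq2 : Tendsto (fun k => pr H (c (φ k))) atTop (𝓝 (pr H z)) := by
      rw [hzq]
      exact htend'.comp hφ.tendsto_atTop
    have hev1 : ∀ᶠ k in atTop, pr H (c (φ k)) ∈ Q := hq2 (hQop.mem_nhds hQz)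
    filter_upwards [hev1, Filter.eventually_ge_atTop k₀] with k h1 h2
    exact hQprop (c (φ k)) (hcU (φ k)) (hWanti h2 (hφW k)) h1
  have hzC : z ∈ C := hC (fun k => hcC (φ k)) htz
  exact ⟨z, hzC, hzq⟩

end Main

section Master
variable {G : Type*} [TopologicalSpace G] [StrongTopGyrogroup G]

local infixl:65 " ⊹ " => Gyrogroup.add
local prefix:100 "∸" => Gyrogroup.neg
local notation "𝟘" => Gyrogroup.zero
local notation "γ" => Gyrogroup.gyr

theorem main (H : Set G) (hadm : AdmissibleFromBasis G H) (hloc : LocallyCompactSpace H)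
    (hmet : TopologicalSpace.MetrizableSpace H) (hseq : SequentialSpace (CosetSpace G H)) :
    SequentialSpace G := by
  classical
  obtain ⟨hH0, hHneg, hHadd, hHgyr, hHcl⟩ := admissible_props hadm
  haveI := hmet
  obtain ⟨s, hs_nhds, -, hs_cp⟩ :=
    hloc.local_compact_nhds (⟨𝟘, hH0⟩ : H) Set.univ Filter.univ_mem
  rw [nhds_subtype_eq_comap] at hs_nhds
  obtain ⟨W', hW'n, hW's⟩ := hs_nhds
  set K : Set G := Subtype.val '' s with hKdef
  have hKcp : IsCompact K := hs_cp.image continuous_subtype_val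
  have hHWK' : ∀ x, x ∈ H → x ∈ W' → x ∈ K := fun x hxH hxW =>
    ⟨⟨x, hxH⟩, hW's hxW, rfl⟩
  obtain ⟨W₂, hW₂b, hW₂sub⟩ := shrink hW'n
  have hHWK : H ∩ W₂ ⊆ K := fun x hx => hHWK' x hx.1 (hW₂sub hx.2)
  obtain ⟨U, hUb, hE2⟩ := shrink5 (basis_nhds hW₂b)
  -- countable neighborhood basis of `H` at `0`
  obtain ⟨t, ht⟩ := (𝓝 (⟨𝟘, hH0⟩ : H)).exists_antitone_basis
  have hVf : ∀ k, ∃ V, V ∈ 𝓝 (𝟘 : G) ∧ (Subtype.val : H → G) ⁻¹' V ⊆ t k := by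
    intro k
    have htk : t k ∈ 𝓝 (⟨𝟘, hH0⟩ : H) := ht.1.mem_of_mem trivial
    rw [nhds_subtype_eq_comap] at htk
    exact Filter.mem_comap.mp htk
  choose Vf hVfn hVfsub using hVf
  have hsep : ∀ x ∈ H, (∀ k, x ∈ Vf k) → x = (𝟘 : G) := by
    intro x hxH hxV
    have hxt : ∀ k, (⟨x, hxH⟩ : H) ∈ t k := fun k => hVfsub k (hxV k)
    have hmem : (⟨𝟘, hH0⟩ : H) ∈ closure {(⟨x, hxH⟩ : H)} := by
      rw [mem_closure_iff_nhds]
      intro S hS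
      obtain ⟨k, -, hk⟩ := ht.1.mem_iff.mp hS
      exact ⟨⟨x, hxH⟩, hk (hxt k), rfl⟩
    rw [closure_singleton] at hmem
    have heq : (⟨𝟘, hH0⟩ : H) = ⟨x, hxH⟩ := hmem
    exact (congrArg Subtype.val heq).symm
  -- recursive construction of the `Wf` sequence
  have hstepex : ∀ S : Set G, ∃ V : Set G, S ∈ 𝓝 (𝟘 : G) →
      V ∈ bas G ∧ ∀ x ∈ V, ∀ y ∈ V, x ⊹ y ∈ S := by
    intro S
    by_cases hS : S ∈ 𝓝 (𝟘 : G)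
    · obtain ⟨V, hVb, hV⟩ := shrink2 hS
      exact ⟨V, fun _ => ⟨hVb, hV⟩⟩
    · exact ⟨U, fun h => absurd h hS⟩
  choose step hstep using hstepex
  set Wf : ℕ → Set G := fun k => Nat.rec (step (Vf 0)) (fun k Wk => step (Vf (k+1) ∩ Wk)) k
    with hWfdef
  have hWfb : ∀ k, Wf k ∈ bas G ∧ ∀ x ∈ Wf k, ∀ y ∈ Wf k,
      x ⊹ y ∈ (Nat.rec (Vf 0) (fun k _ => Vf (k+1) ∩ Wf k) k : Set G) := by
    intro k
    induction k with
    | zero => exact hstep (Vf 0) (hVfn 0)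
    | succ k ih =>
      have hnh : Vf (k+1) ∩ Wf k ∈ 𝓝 (𝟘 : G) :=
        Filter.inter_mem (hVfn (k+1)) (basis_nhds ih.1)
      exact hstep _ hnh
  have hWb : ∀ k, Wf k ∈ bas G := fun k => (hWfb k).1
  have hpair : ∀ k, ∀ x ∈ Wf k, ∀ y ∈ Wf k, x ⊹ y ∈ Vf k := by
    intro k
    cases k with
    | zero => exact fun x hx y hy => (hWfb 0).2 x hx y hy
    | succ k => exact fun x hx y hy => ((hWfb (k+1)).2 x hx y hy).1
  have hWdec : ∀ k, Wf (k+1) ⊆ Wf k := by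
    intro k x hx
    have h1 := ((hWfb (k+1)).2 x hx 𝟘 (zero_mem_basis (hWb (k+1)))).2
    rwa [Gyrogroup.add_zero] at h1
  -- conclusion
  refine ⟨fun A hA => ?_⟩
  apply isClosed_of_closure_subset
  intro x hx
  set A' : Set G := (fun y => x ⊹ y) ⁻¹' A with hA'def
  have hA' : IsSeqClosed A' := hA.preimage (cont_add_left x).seqContinuous
  have h0cl : (𝟘 : G) ∈ closure A' := by
    rw [mem_closure_iff_nhds]
    intro N hN
    have hM : (fun w : G => ∸x ⊹ w) ⁻¹' N ∈ 𝓝 x :=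
      (cont_add_left (∸x)).continuousAt
        (show N ∈ 𝓝 (∸x ⊹ x) by rw [Gyrogroup.neg_add]; exact hN)
    obtain ⟨w, hwM, hwA⟩ := mem_closure_iff_nhds.mp hx _ hM
    refine ⟨∸x ⊹ w, hwM, ?_⟩
    show x ⊹ (∸x ⊹ w) ∈ A
    rw [add_neg_cancel_left]
    exact hwA
  have h0U : (𝟘 : G) ∈ closure U := subset_closure (zero_mem_basis hUb)
  have hΦcl : ∀ k, IsClosed (pr H '' (A' ∩ (closure U ∩ closure (Wf k)))) := by
    intro k
    have hCseq : IsSeqClosed (A' ∩ (closure U ∩ closure (Wf k))) := by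
      intro u p hu htu
      exact ⟨hA' (fun n => (hu n).1) htu,
        (isClosed_closure.inter isClosed_closure).isSeqClosed (fun n => (hu n).2) htu⟩
    exact image_seqClosed hH0 hHneg hHadd hHgyr hHcl hUb hW₂b hKcp hHWK hE2 hseq hmet
      hWb hpair hsep hWdec hCseq (fun y hy => hy.2.1)
  have hΦmem : ∀ k, ∃ y, y ∈ A' ∩ (closure U ∩ closure (Wf k)) ∧ pr H y = pr H 𝟘 := by
    intro k
    have hincl : pr H 𝟘 ∈ closure (pr H '' (A' ∩ (closure U ∩ closure (Wf k)))) := by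
      rw [mem_closure_iff_nhds]
      intro T hT
      have hN : pr H ⁻¹' T ∈ 𝓝 (𝟘 : G) := (continuous_pr H).continuousAt hT
      have hN' : pr H ⁻¹' T ∩ (U ∩ Wf k) ∈ 𝓝 (𝟘 : G) :=
        Filter.inter_mem hN (Filter.inter_mem (basis_nhds hUb) (basis_nhds (hWb k)))
      obtain ⟨a, haN, haA'⟩ := mem_closure_iff_nhds.mp h0cl _ hN'
      exact ⟨pr H a, haN.1,
        ⟨a, ⟨haA', subset_closure haN.2.1, subset_closure haN.2.2⟩, rfl⟩⟩
    rw [(hΦcl k).closure_eq] at hincl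
    obtain ⟨y, hy, hpy⟩ := hincl
    exact ⟨y, hy, hpy⟩
  choose aseq haseq hapr using hΦmem
  have hfib : ∀ k, aseq k ∈ closure U ∧ pr H (aseq k) = pr H 𝟘 :=
    fun k => ⟨(haseq k).2.1, hapr k⟩
  obtain ⟨α, ⟨hαU, hαpr⟩, φ, hφ, htenα⟩ :=
    fiber_seq_compact hH0 hHneg hHadd hHgyr hHcl hUb hW₂b hKcp hHWK hE2 hmet h0U aseq hfib
  have hαH : α ∈ H := by
    have h1 : ∸α ⊹ 𝟘 ∈ H := (pr_eq_iff hH0 hHneg hHadd hHgyr).1 hαpr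
    rw [Gyrogroup.add_zero] at h1
    have h2 := hHneg _ h1
    rwa [neg_neg] at h2
  have hαW : ∀ k, α ∈ closure (Wf k) := by
    intro k
    apply isClosed_closure.mem_of_tendsto htenα
    filter_upwards [Filter.eventually_ge_atTop k] with j hj
    have hk : k ≤ φ j := le_trans hj hφ.le_apply
    have hanti : closure (Wf (φ j)) ⊆ closure (Wf k) :=
      closure_mono ((antitone_nat_of_succ_le hWdec) hk)
    exact hanti (haseq (φ j)).2.2
  have hαV : ∀ k, α ∈ Vf k := by
    intro k
    obtain ⟨w, hw, w', hw', hα⟩ := mem_closure_decomp (hWb k) (hαW k)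
    rw [hα]
    exact hpair k w hw w' hw'
  have hα0 : α = (𝟘 : G) := hsep α hαH hαV
  rw [hα0] at htenα
  have h0A' : (𝟘 : G) ∈ A' := hA' (fun j => (haseq (φ j)).1) htenα
  have hxA : x ⊹ 𝟘 ∈ A := h0A'
  rwa [Gyrogroup.add_zero] at hxA

end Master
end SeqGyro

/-- If `H` is a locally compact metrizable admissible subgyrogroup generated from
the base and `G/H` is sequential, then `G` is sequential. -/
theorem sequential_of_quotient_sequential {G : Type*} [TopologicalSpace G]
    [StrongTopGyrogroup G] (H : Set G) (hadm : AdmissibleFromBasis G H)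
    (hloc : LocallyCompactSpace H) (hmet : TopologicalSpace.MetrizableSpace H)
    (hseq : SequentialSpace (CosetSpace G H)) :
    SequentialSpace G := by
  exact SeqGyro.main H hadm hloc hmet hseq
end

section
/- Let G be a strongly topological gyrogroup with symmetric neighborhood base 𝒰 at 0, and H a locally compact metrizable admissible subgyrogroup generated from 𝒰. If the quotient space G/H is strictly Fréchet-Urysohn, then G is strictly Fréchet-Urysohn. -/
namespace StrictlyFUAux

open Gyrogroup Filter Topology Set

section Alg

variable {G : Type*} [Gyrogroup G]

lemma left_cancel {a x y : G} (h : add a x = add a y) : x = y := by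
  have h2 : add (neg a) (add a x) = add (neg a) (add a y) := by rw [h]
  rw [left_gyroassoc, left_gyroassoc, Gyrogroup.neg_add, Gyrogroup.zero_add, Gyrogroup.zero_add] at h2
  exact (gyr_bijective (neg a) a).1 h2

lemma gyr_zero_left (y z : G) : gyr zero y z = z := by
  have h := left_gyroassoc (zero : G) y z
  rw [Gyrogroup.zero_add, Gyrogroup.zero_add] at h
  exact (left_cancel h).symm

lemma gyr_neg_add (a z : G) : gyr (neg a) a z = z := by
  have h := loop (neg a) a
  rw [Gyrogroup.neg_add] at h
  rw [← h]; exact gyr_zero_left a z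

lemma neg_add_cancel_left (a x : G) : add (neg a) (add a x) = x := by
  rw [left_gyroassoc, Gyrogroup.neg_add, Gyrogroup.zero_add]; exact gyr_neg_add a x

lemma gyr_add_neg (a z : G) : gyr a (neg a) z = z := by
  have h := loop a (neg a)
  rw [Gyrogroup.add_neg] at h
  rw [← h]; exact gyr_zero_left (neg a) z

lemma add_neg_cancel_left (a x : G) : add a (add (neg a) x) = x := by
  rw [left_gyroassoc, Gyrogroup.add_neg, Gyrogroup.zero_add]; exact gyr_add_neg a x

lemma gyr_zero_right (x y : G) : gyr x y zero = zero := by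
  have h : add (gyr x y zero) (gyr x y zero) = add (gyr x y zero) zero := by
    rw [← gyr_add, Gyrogroup.add_zero, Gyrogroup.add_zero]
  exact left_cancel h

lemma eq_neg_of_add_eq_zero {a x : G} (h : add a x = zero) : x = neg a := by
  have h2 := congrArg (fun t => add (neg a) t) h
  rw [neg_add_cancel_left, Gyrogroup.add_zero] at h2
  exact h2

lemma gyr_neg' (x y a : G) : gyr x y (neg a) = neg (gyr x y a) := by
  apply eq_neg_of_add_eq_zero
  rw [← gyr_add, Gyrogroup.add_neg, gyr_zero_right]

lemma add_gyr_neg (x v : G) : add (add x v) (gyr x v (neg v)) = x := by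
  rw [← left_gyroassoc, Gyrogroup.add_neg, Gyrogroup.add_zero]

lemma add_neg_gyr (c h : G) : add (add c (neg h)) (gyr c (neg h) h) = c := by
  rw [← left_gyroassoc, Gyrogroup.neg_add, Gyrogroup.add_zero]

end Alg

section Top

variable {G : Type*} [TopologicalSpace G] [StrongTopGyrogroup G]

lemma cont_addl (x : G) : Continuous fun b : G => add x b :=
  TopGyrogroup.continuous_add.comp (continuous_const.prodMk continuous_id)

lemma cont_addr (h : G) : Continuous fun c : G => add c h :=
  TopGyrogroup.continuous_add.comp (continuous_id.prodMk continuous_const)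

lemma zero_mem_basic {W : Set G} (hW : W ∈ StrongTopGyrogroup.basis (G := G)) :
    (zero : G) ∈ W :=
  mem_of_mem_nhds (StrongTopGyrogroup.basis_mem_nhds W hW)

lemma gyr_mem_basic {W : Set G} (hW : W ∈ StrongTopGyrogroup.basis (G := G))
    (x y : G) {a : G} (ha : a ∈ W) : gyr x y a ∈ W := by
  rw [← StrongTopGyrogroup.basis_gyr W hW x y]
  exact mem_image_of_mem _ ha

lemma exists_basic_add {N : Set G} (hN : N ∈ 𝓝 (zero : G)) :
    ∃ W₁ ∈ StrongTopGyrogroup.basis (G := G), ∃ W₂ ∈ StrongTopGyrogroup.basis (G := G),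
      Set.image2 add W₁ W₂ ⊆ N := by
  have hc : ContinuousAt (fun p : G × G => add p.1 p.2) ((zero : G), (zero : G)) :=
    TopGyrogroup.continuous_add.continuousAt
  have hpre : (fun p : G × G => add p.1 p.2) ⁻¹' N ∈ 𝓝 ((zero : G), (zero : G)) := by
    apply hc
    show N ∈ 𝓝 (add (zero : G) zero)
    rw [Gyrogroup.add_zero]; exact hN
  rw [nhds_prod_eq] at hpre
  obtain ⟨A, hA, B, hB, hAB⟩ := Filter.mem_prod_iff.mp hpre
  obtain ⟨W₁, hW₁, hW₁A⟩ := StrongTopGyrogroup.basis_is_basis A hA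
  obtain ⟨W₂, hW₂, hW₂B⟩ := StrongTopGyrogroup.basis_is_basis B hB
  refine ⟨W₁, hW₁, W₂, hW₂, ?_⟩
  rintro _ ⟨a, ha, b, hb, rfl⟩
  exact hAB (Set.mk_mem_prod (hW₁A ha) (hW₂B hb))

lemma exists_basic_triple {N : Set G} (hN : N ∈ 𝓝 (zero : G)) :
    ∃ P ∈ StrongTopGyrogroup.basis (G := G),
      Set.image2 add P (Set.image2 add P P) ⊆ N := by
  obtain ⟨W₁, hW₁, W₂, hW₂, h12⟩ := exists_basic_add hN
  obtain ⟨W₃, hW₃, W₄, hW₄, h34⟩ :=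
    exists_basic_add (StrongTopGyrogroup.basis_mem_nhds W₂ hW₂)
  have hmem : W₁ ∩ (W₃ ∩ W₄) ∈ 𝓝 (zero : G) :=
    Filter.inter_mem (StrongTopGyrogroup.basis_mem_nhds _ hW₁)
      (Filter.inter_mem (StrongTopGyrogroup.basis_mem_nhds _ hW₃)
        (StrongTopGyrogroup.basis_mem_nhds _ hW₄))
  obtain ⟨P, hP, hPsub⟩ := StrongTopGyrogroup.basis_is_basis _ hmem
  refine ⟨P, hP, ?_⟩
  rintro _ ⟨a, ha, _, ⟨b, hb, c, hc, rfl⟩, rfl⟩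
  exact h12 ⟨a, (hPsub ha).1, add b c,
    h34 ⟨b, (hPsub hb).2.1, c, (hPsub hc).2.2, rfl⟩, rfl⟩

lemma closure_subset_add {A W : Set G} (hW : W ∈ StrongTopGyrogroup.basis (G := G)) :
    closure A ⊆ Set.image2 add A W := by
  intro x hx
  have hopen : IsOpen {z : G | add (neg x) z ∈ W} :=
    (StrongTopGyrogroup.basis_open W hW).preimage (cont_addl (neg x))
  have hxmem : x ∈ {z : G | add (neg x) z ∈ W} := by
    show add (neg x) x ∈ W
    rw [Gyrogroup.neg_add]; exact zero_mem_basic hW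
  obtain ⟨a, hao, haA⟩ := mem_closure_iff.mp hx _ hopen hxmem
  have hv : add (neg x) a ∈ W := hao
  have hxa : add x (add (neg x) a) = a := add_neg_cancel_left x a
  refine ⟨a, haA, gyr x (add (neg x) a) (neg (add (neg x) a)),
    gyr_mem_basic hW _ _ (StrongTopGyrogroup.basis_symm W hW _ hv), ?_⟩
  have h5 := add_gyr_neg x (add (neg x) a)
  rwa [hxa] at h5

lemma exists_P_seq (O' : ℕ → Set G) (hO : ∀ k, O' k ∈ 𝓝 (zero : G)) :
    ∃ P : ℕ → Set G, (∀ k, P k ∈ StrongTopGyrogroup.basis (G := G)) ∧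
      ∀ k, Set.image2 add (P (k+1)) (Set.image2 add (P (k+1)) (P (k+1))) ⊆ P k ∩ O' k := by
  have hstep : ∀ (k : ℕ) (Q : {S : Set G // S ∈ StrongTopGyrogroup.basis (G := G)}),
      ∃ R : {S : Set G // S ∈ StrongTopGyrogroup.basis (G := G)},
        Set.image2 add R.1 (Set.image2 add R.1 R.1) ⊆ Q.1 ∩ O' k := by
    intro k Q
    obtain ⟨R, hR, hRs⟩ := exists_basic_triple
      (Filter.inter_mem (StrongTopGyrogroup.basis_mem_nhds _ Q.2) (hO k))
    exact ⟨⟨R, hR⟩, hRs⟩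
  choose f hf using hstep
  obtain ⟨W0, hW0, -⟩ := StrongTopGyrogroup.basis_is_basis (Set.univ : Set G) Filter.univ_mem
  let Pc : ℕ → {S : Set G // S ∈ StrongTopGyrogroup.basis (G := G)} :=
    fun k => Nat.rec ⟨W0, hW0⟩ (fun k p => f k p) k
  exact ⟨fun k => (Pc k).1, fun k => (Pc k).2, fun k => hf k (Pc k)⟩

end Top

end StrictlyFUAux

/-- If `H` is a locally compact metrizable admissible subgyrogroup generated from
the base and `G/H` is strictly Fréchet–Urysohn, then so is `G`. -/
theorem strictlyFU_of_quotient {G : Type*} [TopologicalSpace G]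
    [StrongTopGyrogroup G] (H : Set G) (hadm : AdmissibleFromBasis G H)
    (hloc : LocallyCompactSpace H) (hmet : TopologicalSpace.MetrizableSpace H)
    (hq : StrictlyFrechetUrysohn (CosetSpace G H)) :
    StrictlyFrechetUrysohn G := by
  classical
  open Gyrogroup Filter Topology Set StrictlyFUAux in
  obtain ⟨U, hU1, hU2, hUH⟩ := hadm
  -- basic facts about H
  have h0H : (zero : G) ∈ H := by
    rw [hUH]; exact Set.mem_iInter.mpr fun n => zero_mem_basic (hU1 n)
  have hHU : ∀ z ∈ H, ∀ n, z ∈ U n := by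
    intro z hz n; rw [hUH] at hz; exact Set.mem_iInter.mp hz n
  have hHadd : ∀ a ∈ H, ∀ b ∈ H, add a b ∈ H := by
    intro a ha b hb
    rw [hUH]; refine Set.mem_iInter.mpr fun n => ?_
    refine hU2 n ⟨a, hHU a ha (n+1), add b zero,
      ⟨b, hHU b hb (n+1), zero, zero_mem_basic (hU1 (n+1)), rfl⟩, ?_⟩
    rw [Gyrogroup.add_zero]
  have hHgyrIm : ∀ x y : G, gyr x y '' H = H := by
    intro x y
    rw [hUH, Set.image_iInter (Gyrogroup.gyr_bijective x y) U]
    exact Set.iInter_congr fun n => StrongTopGyrogroup.basis_gyr (U n) (hU1 n) x y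
  have hHgyr : ∀ (x y h : G), h ∈ H → gyr x y h ∈ H := by
    intro x y h hh
    rw [← hHgyrIm x y]; exact Set.mem_image_of_mem _ hh
  have hHgyrSurj : ∀ (x y h' : G), h' ∈ H → ∃ z ∈ H, gyr x y z = h' := by
    intro x y h' hh'
    rw [← hHgyrIm x y] at hh'
    obtain ⟨z, hz, hze⟩ := hh'
    exact ⟨z, hz, hze⟩
  -- metric separation: open sets O k with H ∩ ⋂ O k = {0}
  letI : MetricSpace H := TopologicalSpace.metrizableSpaceMetric H
  have hOex : ∀ k : ℕ, ∃ O : Set G, IsOpen O ∧ (zero : G) ∈ O ∧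
      ∀ z (hz : z ∈ H), z ∈ O →
        dist (⟨z, hz⟩ : H) (⟨zero, h0H⟩ : H) < 1/(k+1) := by
    intro k
    have hb : IsOpen (Metric.ball (⟨zero, h0H⟩ : H) (1/(k+1))) := Metric.isOpen_ball
    obtain ⟨O, hO, hOe⟩ := isOpen_induced_iff.mp hb
    have hpos : (0 : ℝ) < 1/(k+1) := by positivity
    refine ⟨O, hO, ?_, ?_⟩
    · have h1 : (⟨zero, h0H⟩ : H) ∈ Metric.ball (⟨zero, h0H⟩ : H) (1/(k+1)) :=
        Metric.mem_ball_self hpos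
      rw [← hOe] at h1
      exact h1
    · intro z hz hzO
      have h1 : (⟨z, hz⟩ : H) ∈ Subtype.val ⁻¹' O := hzO
      rw [hOe] at h1
      exact Metric.mem_ball.mp h1
  choose O hOopen hO0 hOsep using hOex
  have hHO : ∀ z ∈ H, (∀ k, z ∈ O k) → z = zero := by
    intro z hz hzk
    have hd : dist (⟨z, hz⟩ : H) (⟨zero, h0H⟩ : H) ≤ 0 := by
      by_contra hpos
      push_neg at hpos
      obtain ⟨k, hk⟩ := exists_nat_one_div_lt hpos
      exact absurd (hOsep k z hz (hzk k)) (not_lt.mpr hk.le)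
    have := dist_le_zero.mp hd
    exact congrArg Subtype.val this
  -- local compactness: V open ∋ 0 with H ∩ V inside a compact C
  obtain ⟨K, hKc, hKn⟩ := exists_compact_mem_nhds (⟨zero, h0H⟩ : H)
  rw [nhds_induced] at hKn
  obtain ⟨t, ht, htK⟩ := Filter.mem_comap.mp hKn
  have hVopen : IsOpen (interior t) := isOpen_interior
  have hV0 : (zero : G) ∈ interior t := mem_interior_iff_mem_nhds.mpr ht
  have hCc : IsCompact (Subtype.val '' K : Set G) := hKc.image continuous_subtype_val
  have hHVC : ∀ z ∈ H, z ∈ interior t → z ∈ (Subtype.val '' K : Set G) := by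
    intro z hz hzV
    have h1 : z ∈ t := interior_subset hzV
    exact ⟨⟨z, hz⟩, htK (show (⟨z, hz⟩ : H) ∈ Subtype.val ⁻¹' t from h1), rfl⟩
  -- the shrinking sequence P
  obtain ⟨P, hPb, hPrec⟩ := exists_P_seq
    (fun k => O k ∩ (U k ∩ interior t))
    (fun k => Filter.inter_mem ((hOopen k).mem_nhds (hO0 k))
      (Filter.inter_mem (StrongTopGyrogroup.basis_mem_nhds _ (hU1 k))
        (hVopen.mem_nhds hV0)))
  have h0P : ∀ k, (zero : G) ∈ P k := fun k => zero_mem_basic (hPb k)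
  have hPsq : ∀ k, Set.image2 add (P (k+1)) (P (k+1)) ⊆
      P k ∩ (O k ∩ (U k ∩ interior t)) := by
    intro k
    rintro _ ⟨a, ha, b, hb, rfl⟩
    refine hPrec k ⟨a, ha, add b zero, ⟨b, hb, zero, h0P _, rfl⟩, ?_⟩
    rw [Gyrogroup.add_zero]
  have hPmono : ∀ k, P (k+1) ⊆ P k := by
    intro k p hp
    exact (hPsq k ⟨p, hp, zero, h0P _, Gyrogroup.add_zero p⟩).1
  have hPle : ∀ {k j : ℕ}, k ≤ j → P j ⊆ P k := by
    have hd : ∀ d k, P (k + d) ⊆ P k := by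
      intro d
      induction d with
      | zero => intro k; exact subset_rfl
      | succ d ih => intro k; exact (hPmono (k + d)).trans (ih k)
    intro k j h
    obtain ⟨d, rfl⟩ := Nat.exists_eq_add_of_le h
    exact hd d k
  have hclP : ∀ k, closure (P (k+1)) ⊆ O k ∩ U k := by
    intro k
    refine (closure_subset_add (hPb (k+1))).trans ?_
    intro y hy
    have h1 := hPsq k hy
    exact ⟨h1.2.1, h1.2.2.1⟩
  -- quotient map facts
  set π : G → CosetSpace G H := Quotient.mk (cosetSetoid G H) with hπ
  have hπcont : Continuous π := continuous_quotient_mk'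
  have hrel : ∀ {x y : G}, π x = π y → add x '' H = add y '' H := by
    intro x y h
    exact Quotient.exact h
  have hSsat : ∀ {W : Set G}, W ∈ StrongTopGyrogroup.basis (G := G) →
      ∀ {x s : G}, s ∈ Set.image2 add W H → π x = π s → x ∈ Set.image2 add W H := by
    intro W hW x s hs hxs
    obtain ⟨w, hw, h, hh, rfl⟩ := hs
    have him : add x '' H = add (add w h) '' H := hrel hxs
    have hx0 : x ∈ add x '' H := ⟨zero, h0H, Gyrogroup.add_zero x⟩
    rw [him] at hx0
    obtain ⟨h₂, hh₂, hx⟩ := hx0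
    obtain ⟨z, hz, hze⟩ := hHgyrSurj w h h₂ hh₂
    refine ⟨w, hw, add h z, hHadd h hh z hz, ?_⟩
    rw [Gyrogroup.left_gyroassoc, hze, hx]
  have hSopen : ∀ {W : Set G}, W ∈ StrongTopGyrogroup.basis (G := G) →
      IsOpen (Set.image2 add W H) := by
    intro W hW
    have heq : Set.image2 add W H = ⋃ h ∈ H, (fun c => add c (neg h)) ⁻¹' W := by
      ext c
      simp only [Set.mem_iUnion, Set.mem_preimage]
      constructor
      · rintro ⟨w, hw, h, hh, rfl⟩
        refine ⟨gyr w h h, hHgyr w h h hh, ?_⟩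
        rw [← gyr_neg', add_gyr_neg]
        exact hw
      · rintro ⟨h, hh, hcw⟩
        exact ⟨add c (neg h), hcw, gyr c (neg h) h, hHgyr c (neg h) h hh, add_neg_gyr c h⟩
    rw [heq]
    exact isOpen_biUnion fun h _ =>
      (StrongTopGyrogroup.basis_open W hW).preimage (cont_addr (neg h))
  have hSnhds : ∀ {W : Set G}, W ∈ StrongTopGyrogroup.basis (G := G) →
      π '' (Set.image2 add W H) ∈ nhds (π zero) := by
    intro W hW
    have hpre : π ⁻¹' (π '' (Set.image2 add W H)) = Set.image2 add W H := by
      ext c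
      simp only [Set.mem_preimage, Set.mem_image]
      constructor
      · rintro ⟨s, hs, hse⟩
        exact hSsat hW hs hse.symm
      · intro hc
        exact ⟨c, hc, rfl⟩
    have hop : IsOpen (π '' (Set.image2 add W H)) := by
      rw [isOpen_coinduced (f := π)]
      rw [hpre]
      exact hSopen hW
    have h0mem : π zero ∈ π '' (Set.image2 add W H) :=
      ⟨zero, ⟨zero, zero_mem_basic hW, zero, h0H, Gyrogroup.add_zero zero⟩, rfl⟩
    exact hop.mem_nhds h0mem
  -- main argument
  intro A x hx
  have hB0 : ∀ n, (zero : G) ∈ closure ((fun a => add (neg x) a) '' A n) := by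
    intro n
    have h1 := image_closure_subset_closure_image (s := A n) (cont_addl (neg x))
      ⟨x, hx n, rfl⟩
    simp only [Gyrogroup.neg_add] at h1
    exact h1
  have hB0' : ∀ n, (zero : G) ∈ closure (((fun a => add (neg x) a) '' A n) ∩ P (n+1)) := by
    intro n
    rw [mem_closure_iff]
    intro o ho h0o
    have h1 : IsOpen (o ∩ P (n+1)) := ho.inter (StrongTopGyrogroup.basis_open _ (hPb (n+1)))
    have h2 : (zero : G) ∈ o ∩ P (n+1) := ⟨h0o, h0P _⟩
    obtain ⟨y, hy1, hy2⟩ := mem_closure_iff.mp (hB0 n) _ h1 h2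
    exact ⟨y, hy1.1, hy2, hy1.2⟩
  have hπcl : ∀ n, π zero ∈ closure (π '' (((fun a => add (neg x) a) '' A n) ∩ P (n+1))) :=
    fun n => image_closure_subset_closure_image hπcont ⟨zero, hB0' n, rfl⟩
  obtain ⟨u, hu1, hu2⟩ := hq (fun n => π '' (((fun a => add (neg x) a) '' A n) ∩ P (n+1)))
    (π zero) hπcl
  choose b hbmem hbπ using hu1
  -- the lifted sequence converges to zero
  have hbt : Filter.Tendsto b Filter.atTop (nhds (zero : G)) := by
    by_contra hcon
    rw [Filter.tendsto_def] at hcon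
    push_neg at hcon
    obtain ⟨s, hs, hsb⟩ := hcon
    have hOop : IsOpen (interior s) := isOpen_interior
    have hO0' : (zero : G) ∈ interior s := mem_interior_iff_mem_nhds.mpr hs
    have hfreq : ∃ᶠ n in Filter.atTop, b n ∉ interior s := by
      have h1 : ¬ ∀ᶠ n in Filter.atTop, b n ∈ s := hsb
      rw [Filter.not_eventually] at h1
      exact h1.mono fun n hn hOn => hn (interior_subset hOn)
    obtain ⟨W₀, hW₀, N₀, hN₀, hWN⟩ := exists_basic_add (hOop.mem_nhds hO0')
    have hRex : ∀ k : ℕ, ∃ R ∈ StrongTopGyrogroup.basis (G := G), R ⊆ W₀ ∩ P (k+2) :=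
      fun k => StrongTopGyrogroup.basis_is_basis _
        (Filter.inter_mem (StrongTopGyrogroup.basis_mem_nhds _ hW₀)
          (StrongTopGyrogroup.basis_mem_nhds _ (hPb (k+2))))
    choose R hRb hRsub using hRex
    have hev : ∀ k, ∀ᶠ n in Filter.atTop, b n ∈ Set.image2 add (R k) H := by
      intro k
      filter_upwards [hu2.eventually (hSnhds (hRb k))] with n hn
      rw [← hbπ n] at hn
      obtain ⟨s', hs', hse⟩ := hn
      exact hSsat (hRb k) hs' hse.symm
    have hsel : ∀ k : ℕ, ∃ n, k+1 ≤ n ∧ b n ∉ interior s ∧ b n ∈ Set.image2 add (R k) H := by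
      intro k
      obtain ⟨n, hn, h1, h2⟩ := (Filter.frequently_atTop.mp ((hev k).and_frequently hfreq)) (k+1)
      exact ⟨n, hn, h2, h1⟩
    choose n hnk hnO hnm using hsel
    have hdec : ∀ k, ∃ w, w ∈ R k ∧ ∃ h, h ∈ H ∧ add w h = b (n k) := by
      intro k
      obtain ⟨w, hw, h, hh, he⟩ := hnm k
      exact ⟨w, hw, h, hh, he⟩
    choose w hw hh hhH hheq using hdec
    have hhval : ∀ k, hh k = add (neg (w k)) (b (n k)) := by
      intro k
      rw [← hheq k, StrictlyFUAux.neg_add_cancel_left]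
    have hhmem : ∀ k, hh k ∈ Set.image2 add (P (k+2)) (P (k+2)) := by
      intro k
      have h1 : neg (w k) ∈ P (k+2) :=
        (hRsub k (StrongTopGyrogroup.basis_symm _ (hRb k) _ (hw k))).2
      have h2 : b (n k) ∈ P (k+2) := by
        have h3 : b (n k) ∈ P (n k + 1) := (hbmem (n k)).2
        exact hPle (by have := hnk k; omega) h3
      exact ⟨neg (w k), h1, b (n k), h2, (hhval k).symm⟩
    have hhball : ∀ k, hh k ∈ P (k+1) ∩ (O (k+1) ∩ (U (k+1) ∩ interior t)) :=
      fun k => hPsq (k+1) (hhmem k)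
    have hhC : ∀ k, hh k ∈ (Subtype.val '' K : Set G) :=
      fun k => hHVC _ (hhH k) (hhball k).2.2.2
    have hle : Filter.map hh Filter.atTop ≤ Filter.principal (Subtype.val '' K : Set G) :=
      Filter.le_principal_iff.mpr (Filter.mem_map.mpr (Filter.Eventually.of_forall hhC))
    obtain ⟨hstar, hstarC, hcl⟩ := hCc.exists_clusterPt hle
    have hstartail : ∀ k, hstar ∈ closure (P (k+1)) := by
      intro k
      have hT : hh '' Set.Ici k ∈ Filter.map hh Filter.atTop :=
        Filter.image_mem_map (Filter.Ici_mem_atTop k)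
      have hsubcl : hstar ∈ closure (hh '' Set.Ici k) := by
        rw [mem_closure_iff_nhds]
        intro tt htt
        exact hcl.neBot.nonempty_of_mem
          (Filter.inter_mem (Filter.mem_inf_of_left htt) (Filter.mem_inf_of_right hT))
      refine closure_mono ?_ hsubcl
      rintro _ ⟨j, hj, rfl⟩
      exact hPle (Nat.add_le_add_right hj 1) (hhball j).1
    have hstarOU : ∀ k, hstar ∈ O k ∩ U k := fun k => hclP k (hstartail k)
    have hstarH : hstar ∈ H := by
      rw [hUH]; exact Set.mem_iInter.mpr fun k => (hstarOU k).2
    have hstar0 : hstar = zero := hHO hstar hstarH (fun k => (hstarOU k).1)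
    have hN0 : N₀ ∈ nhds hstar := by
      rw [hstar0]; exact StrongTopGyrogroup.basis_mem_nhds _ hN₀
    have hex : ∃ k, hh k ∈ N₀ := by
      have hmem := Filter.inter_mem (Filter.mem_inf_of_left hN0)
        (Filter.mem_inf_of_right (Filter.range_mem_map (m := hh) (f := Filter.atTop)))
      obtain ⟨y, hy1, k, hk⟩ := hcl.neBot.nonempty_of_mem hmem
      exact ⟨k, hk ▸ hy1⟩
    obtain ⟨k, hkN⟩ := hex
    exact hnO k (hWN ⟨w k, (hRsub k (hw k)).1, hh k, hkN, hheq k⟩)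
  -- transport back along the translation by x
  have hApre : ∀ m, ∃ a, a ∈ A m ∧ add (neg x) a = b m := fun m => (hbmem m).1
  choose a' ha'A ha'e using hApre
  refine ⟨a', ha'A, ?_⟩
  have hrepr : a' = fun m => add x (b m) := by
    funext m
    rw [← ha'e m, StrictlyFUAux.add_neg_cancel_left]
  rw [hrepr]
  have htend : Filter.Tendsto (fun m => add x (b m)) Filter.atTop (nhds (add x zero)) :=
    ((cont_addl x).tendsto zero).comp hbt
  rwa [Gyrogroup.add_zero] at htend
end
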